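/- arXiv:1804.00221 — 6 statements merged into one kernel-verified Lean document; each statement's English description precedes it below -/
import Mathlib

section
/- Let b ≥ 5 be an integer and a = r/s with r, s coprime positive integers, 1 < r/s < b, and log_b a irrational. Then the cardinality of the set L ∩ (L − α) in R/Z equals ⌊(b−1)/r⌋ + ⌊(gcd(b,r)−1)/s⌋, where L = {log_b 1, ..., log_b(b−1)} and α = log_b(r/s). -/
/-!
A point of the intersection is `log_b d ≡ log_b e - log_b (r/s) (mod 1)` with `d, e ∈ [1, b)`,
i.e. `d * (r/s) = e * b^k` for some integer `k`, and the sizes of `d, e, r/s` force `k ∈ {0, 1}`.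
The solutions of `d * r = e * t` are `d = (t/g) m`, `e = (r/g) m` with `g = gcd r t`, so both
equations are counted by a floor quotient: for `k = 0` (`t = s`) there are `(b-1)/r` of them, for
`k = 1` (`t = s b`, `g = gcd b r`) the bound `s (b/g) m ≤ b - 1` leaves `(g-1)/s`. The two
families of `d` are disjoint, and `log_b` is injective modulo `1` on `[1, b)`.
-/

open Real

theorem exists_eq_div_gcd_mul_of_mul_eq_mul {d e r t : ℕ} (ht : 0 < t) (h : d * r = e * t) :
    ∃ m, d = t / r.gcd t * m ∧ e = r / r.gcd t * m := by
  set g := r.gcd t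
  have hg : 0 < g := Nat.gcd_pos_of_pos_right r ht
  have hrg : r / g * g = r := Nat.div_mul_cancel (Nat.gcd_dvd_left r t)
  have htg : t / g * g = t := Nat.div_mul_cancel (Nat.gcd_dvd_right r t)
  have h' : d * (r / g) = e * (t / g) := by
    apply Nat.eq_of_mul_eq_mul_right hg
    rw [mul_assoc, hrg, mul_assoc, htg, h]
  obtain ⟨m, rfl⟩ : t / g ∣ d :=
    (Nat.coprime_div_gcd_div_gcd hg).symm.dvd_of_dvd_mul_right ⟨e, by rw [h', mul_comm]⟩
  refine ⟨m, rfl, ?_⟩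
  apply Nat.eq_of_mul_eq_mul_left (Nat.div_pos (Nat.le_of_dvd ht (Nat.gcd_dvd_right r t)) hg)
  rw [mul_comm _ e, ← h']
  ring

theorem sub_one_div_mul_div_eq {b g : ℕ} (s : ℕ) (hg : g ∣ b) (hb : 0 < b) :
    (b - 1) / (s * (b / g)) = (g - 1) / s := by
  obtain ⟨c, rfl⟩ := hg
  have hg0 : 0 < g := Nat.pos_of_mul_pos_right hb
  have hc0 : 0 < c := Nat.pos_of_mul_pos_left hb
  rw [Nat.mul_div_cancel_left c hg0, mul_comm s, ← Nat.div_div_eq_div_mul]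
  congr 1
  apply Nat.div_eq_of_lt_le
  · rw [Nat.sub_one_mul]; omega
  · rw [Nat.sub_add_cancel hg0]; omega

-- Without the ascription on the inner `Finset.Icc`, its decidability instance is not found.
def ratioMatches (N r t : ℕ) : Finset ℕ :=
  {d ∈ Finset.Icc 1 N | ∃ e ∈ (Finset.Icc 1 N : Finset ℕ), d * r = e * t}

theorem card_ratioMatches (N : ℕ) {r t : ℕ} (hr : 0 < r) (ht : 0 < t) :
    (ratioMatches N r t).card = N / max (t / r.gcd t) (r / r.gcd t) := by
  set g := r.gcd t
  have hg : 0 < g := Nat.gcd_pos_of_pos_right r ht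
  have ht' : 0 < t / g := Nat.div_pos (Nat.le_of_dvd ht (Nat.gcd_dvd_right r t)) hg
  have hr' : 0 < r / g := Nat.div_pos (Nat.le_of_dvd hr (Nat.gcd_dvd_left r t)) hg
  have hcross : t / g * r = r / g * t := by
    rw [Nat.div_mul_right_comm (Nat.gcd_dvd_right r t),
      Nat.div_mul_right_comm (Nat.gcd_dvd_left r t), mul_comm]
  have himage : ratioMatches N r t =
      (Finset.Icc 1 (N / max (t / g) (r / g))).image (t / g * ·) := by
    ext d
    simp only [ratioMatches, Finset.mem_filter, Finset.mem_Icc, Finset.mem_image,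
      Nat.le_div_iff_mul_le (lt_max_of_lt_left ht'), mul_max_of_nonneg _ _ (Nat.zero_le _),
      max_le_iff]
    constructor
    · rintro ⟨⟨hd1, hdN⟩, e, ⟨he1, heN⟩, h⟩
      obtain ⟨m, rfl, rfl⟩ := exists_eq_div_gcd_mul_of_mul_eq_mul ht h
      refine ⟨m, ⟨Nat.pos_of_mul_pos_left hd1, ?_, ?_⟩, rfl⟩ <;> linarith
    · rintro ⟨m, ⟨hm1, hmt, hmr⟩, rfl⟩
      refine ⟨⟨Nat.mul_pos ht' hm1, by linarith⟩, r / g * m, ⟨Nat.mul_pos hr' hm1, by linarith⟩, ?_⟩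
      rw [mul_right_comm, hcross, mul_right_comm]
  rw [himage, Finset.card_image_of_injective _ (mul_right_injective₀ ht'.ne'),
    Nat.card_Icc, Nat.add_sub_cancel]

theorem disjoint_ratioMatches_mul {N r t b : ℕ} (ht : 0 < t) (hN : N < b) :
    Disjoint (ratioMatches N r t) (ratioMatches N r (t * b)) := by
  simp only [Finset.disjoint_left, ratioMatches, Finset.mem_filter, Finset.mem_Icc]
  rintro d ⟨-, e, ⟨-, heN⟩, h⟩ ⟨-, e', ⟨he'1, -⟩, h'⟩
  have : e = e' * b := Nat.eq_of_mul_eq_mul_right ht (by rw [← h, h']; ring)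
  nlinarith

theorem coe_logb_eq_coe_logb_sub_iff {b x y c : ℝ} (hb : 1 < b) (hx : 0 < x) (hy : 0 < y)
    (hc : 0 < c) :
    ((logb b x : ℝ) : UnitAddCircle) = ((logb b y - logb b c : ℝ) : UnitAddCircle) ↔
      ∃ k : ℤ, x * c = y * b ^ k := by
  have hlog : logb b x - (logb b y - logb b c) = logb b (x * c / y) := by
    rw [logb_div (by positivity) hy.ne', logb_mul hx.ne' hc.ne']; ring
  rw [QuotientAddGroup.eq_iff_sub_mem, AddSubgroup.mem_zmultiples_iff, hlog]
  refine exists_congr fun k => ?_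
  rw [zsmul_one, eq_comm, logb_eq_iff_rpow_eq (by linarith) hb.ne' (by positivity),
    rpow_intCast, eq_div_iff hy.ne', mul_comm, eq_comm]

theorem eq_zero_or_eq_one_of_mul_eq_mul_zpow {b x y c : ℝ} {k : ℤ} (hx : 1 ≤ x) (hxb : x < b)
    (hy : 1 ≤ y) (hyb : y < b) (hc : 1 ≤ c) (hcb : c ≤ b) (h : x * c = y * b ^ k) :
    k = 0 ∨ k = 1 := by
  have hb : 1 < b := hx.trans_lt hxb
  have hbk : 0 < b ^ k := zpow_pos (by linarith) k
  have hlo : b ^ (0 : ℤ) < b ^ (k + 1) := by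
    rw [zpow_zero, zpow_add_one₀ (by positivity)]
    nlinarith [mul_le_mul hx hc zero_le_one (by linarith)]
  have hhi : b ^ k < b ^ (2 : ℤ) := by
    rw [zpow_two]
    nlinarith [mul_lt_mul_of_lt_of_le_of_nonneg_of_pos hxb hcb (by linarith) (by linarith)]
  have := (zpow_lt_zpow_iff_right₀ hb).mp hlo
  have := (zpow_lt_zpow_iff_right₀ hb).mp hhi
  omega

theorem coe_logb_nat_eq_coe_logb_sub_iff {b d e r s : ℕ} (hd : 1 ≤ d) (hdb : d < b) (he : 1 ≤ e)
    (heb : e < b) (hs : 0 < s) (hsr : s ≤ r) (hrb : r ≤ s * b) :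
    ((logb b d : ℝ) : UnitAddCircle) = ((logb b e - logb b ((r : ℝ) / s) : ℝ) : UnitAddCircle) ↔
      d * r = e * s ∨ d * r = e * (s * b) := by
  have hsR : (0 : ℝ) < s := by exact_mod_cast hs
  have hc : (1 : ℝ) ≤ r / s := by rw [one_le_div hsR]; exact_mod_cast hsr
  have hcb : (r : ℝ) / s ≤ b := by rw [div_le_iff₀ hsR, mul_comm]; exact_mod_cast hrb
  have hdR : (1 : ℝ) ≤ d := by exact_mod_cast hd
  have heR : (1 : ℝ) ≤ e := by exact_mod_cast he
  have hbR : (1 : ℝ) < b := by exact_mod_cast hd.trans_lt hdb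
  have hscaled (k : ℤ) : (d : ℝ) * (r / s) = e * b ^ k ↔ (d * r : ℝ) = e * s * b ^ k := by
    rw [mul_div_assoc', div_eq_iff hsR.ne', mul_right_comm]
  rw [coe_logb_eq_coe_logb_sub_iff hbR (by positivity) (by positivity) (by positivity)]
  constructor
  · rintro ⟨k, hk⟩
    rcases eq_zero_or_eq_one_of_mul_eq_mul_zpow hdR (by exact_mod_cast hdb) heR
      (by exact_mod_cast heb) hc hcb hk with rfl | rfl
    · left; exact_mod_cast (by simpa using (hscaled 0).mp hk : (d * r : ℝ) = e * s)
    · right; rw [← mul_assoc]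
      exact_mod_cast (by simpa using (hscaled 1).mp hk : (d * r : ℝ) = e * s * b)
  · rintro (h | h)
    · exact ⟨0, (hscaled 0).mpr (by rw [zpow_zero, mul_one]; exact_mod_cast h)⟩
    · exact ⟨1, (hscaled 1).mpr (by rw [zpow_one, mul_assoc]; exact_mod_cast h)⟩

theorem injOn_coe_logb {b : ℝ} (hb : 1 < b) :
    Set.InjOn (fun x => ((logb b x : ℝ) : UnitAddCircle)) (Set.Ico 1 b) := by
  have hmem {x : ℝ} (hx : x ∈ Set.Ico 1 b) : logb b x ∈ Set.Ico 0 (0 + 1) := by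
    rw [zero_add, ← logb_self_eq_one hb]
    exact ⟨logb_nonneg hb hx.1, logb_lt_logb hb (by linarith [hx.1]) hx.2⟩
  intro x hx y hy hxy
  exact logb_injOn_pos hb (lt_of_lt_of_le one_pos hx.1) (lt_of_lt_of_le one_pos hy.1)
    ((AddCircle.coe_eq_coe_iff_of_mem_Ico (hmem hx) (hmem hy)).mp hxy)

theorem inter_eq_image_ratioMatches {b r s : ℕ} (hs : 0 < s) (hsr : s ≤ r) (hrb : r ≤ s * b) :
    {x : UnitAddCircle | ∃ d : ℕ, 1 ≤ d ∧ d ≤ b - 1 ∧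
        x = ((Real.logb b d : ℝ) : UnitAddCircle)} ∩
      {x : UnitAddCircle | ∃ d : ℕ, 1 ≤ d ∧ d ≤ b - 1 ∧
        x = ((Real.logb b d - Real.logb b ((r : ℝ) / s) : ℝ) : UnitAddCircle)} =
      (fun d : ℕ => ((Real.logb b d : ℝ) : UnitAddCircle)) ''
        ↑(ratioMatches (b - 1) r s ∪ ratioMatches (b - 1) r (s * b)) := by
  ext x
  simp only [Set.mem_inter_iff, Set.mem_ofPred_eq, Set.mem_image, Finset.coe_union,
    Set.mem_union, Finset.mem_coe, ratioMatches, Finset.mem_filter, Finset.mem_Icc]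
  constructor
  · rintro ⟨⟨d, hd, hdb, rfl⟩, e, he, heb, hde⟩
    refine ⟨d, ?_, rfl⟩
    rcases (coe_logb_nat_eq_coe_logb_sub_iff hd (by omega) he (by omega) hs hsr hrb).mp hde
      with h | h
    exacts [.inl ⟨⟨hd, hdb⟩, e, ⟨he, heb⟩, h⟩, .inr ⟨⟨hd, hdb⟩, e, ⟨he, heb⟩, h⟩]
  · rintro ⟨d, hd, rfl⟩
    obtain ⟨⟨hd, hdb⟩, e, ⟨he, heb⟩, h⟩ : (1 ≤ d ∧ d ≤ b - 1) ∧
        ∃ e, (1 ≤ e ∧ e ≤ b - 1) ∧ (d * r = e * s ∨ d * r = e * (s * b)) := by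
      rcases hd with ⟨hd, e, he, h⟩ | ⟨hd, e, he, h⟩
      exacts [⟨hd, e, he, .inl h⟩, ⟨hd, e, he, .inr h⟩]
    exact ⟨⟨d, hd, hdb, rfl⟩, e, he, heb,
      (coe_logb_nat_eq_coe_logb_sub_iff hd (by omega) he (by omega) hs hsr hrb).mpr h⟩

theorem ncard_L_inter_L_sub_alpha_general (b r s : ℕ) (hb : 5 ≤ b) (hr : 0 < r) (hs : 0 < s)
    (hco : Nat.Coprime r s) (h1 : (s : ℝ) < r) (h2 : (r : ℝ) < (b : ℝ) * s) :
    Set.ncard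
      ({x : UnitAddCircle | ∃ d : ℕ, 1 ≤ d ∧ d ≤ b - 1 ∧
          x = ((Real.logb b d : ℝ) : UnitAddCircle)} ∩
       {x : UnitAddCircle | ∃ d : ℕ, 1 ≤ d ∧ d ≤ b - 1 ∧
          x = ((Real.logb b d - Real.logb b ((r : ℝ) / s) : ℝ) : UnitAddCircle)}) =
      (b - 1) / r + (Nat.gcd b r - 1) / s := by
  have hsr : s < r := by exact_mod_cast h1
  have hrb : r < s * b := by rw [mul_comm]; exact_mod_cast h2
  have hinj : Set.InjOn (fun d : ℕ => ((Real.logb b d : ℝ) : UnitAddCircle))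
      ↑(ratioMatches (b - 1) r s ∪ ratioMatches (b - 1) r (s * b)) := by
    refine (injOn_coe_logb (by norm_cast; omega)).comp Nat.cast_injective.injOn fun d hd => ?_
    have := Finset.mem_Icc.mp (Finset.union_subset (Finset.filter_subset _ _)
      (Finset.filter_subset _ _) hd)
    exact ⟨by exact_mod_cast this.1, by norm_cast; omega⟩
  have hgcd : r.gcd (s * b) = b.gcd r := by
    rw [Nat.Coprime.gcd_mul_left_cancel_right b hco.symm, Nat.gcd_comm]
  rw [inter_eq_image_ratioMatches hs hsr.le hrb.le, hinj.ncard_image,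
    Set.ncard_coe_finset, Finset.card_union_of_disjoint (disjoint_ratioMatches_mul hs (by omega)),
    card_ratioMatches _ hr hs, card_ratioMatches _ hr (by positivity), hco.gcd_eq_one, hgcd,
    Nat.div_one, Nat.div_one, max_eq_right hsr.le,
    max_eq_left (Nat.div_le_div_right hrb.le), Nat.mul_div_assoc s (Nat.gcd_dvd_left b r),
    sub_one_div_mul_div_eq s (Nat.gcd_dvd_left b r) (by omega)]

/-- For `b ≥ 5`, `a = r/s` with `r, s` coprime positive integers,
`1 < r/s < b` and `log_b a` irrational, the cardinality of `L ∩ (L - α)` in `ℝ/ℤ`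
equals `⌊(b-1)/r⌋ + ⌊(gcd(b,r)-1)/s⌋`, where `L = {log_b 1, …, log_b (b-1)}` and
`α = log_b (r/s)`. -/
theorem ncard_L_inter_L_sub_alpha (b r s : ℕ) (hb : 5 ≤ b) (hr : 0 < r) (hs : 0 < s)
    (hco : Nat.Coprime r s) (h1 : (s : ℝ) < r) (h2 : (r : ℝ) < (b : ℝ) * s)
    (hirr : Irrational (Real.logb b ((r : ℝ) / s))) :
    Set.ncard
      ({x : UnitAddCircle | ∃ d : ℕ, 1 ≤ d ∧ d ≤ b - 1 ∧
          x = ((Real.logb b d : ℝ) : UnitAddCircle)} ∩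
       {x : UnitAddCircle | ∃ d : ℕ, 1 ≤ d ∧ d ≤ b - 1 ∧
          x = ((Real.logb b d - Real.logb b ((r : ℝ) / s) : ℝ) : UnitAddCircle)}) =
      (b - 1) / r + (Nat.gcd b r - 1) / s :=
  ncard_L_inter_L_sub_alpha_general b r s hb hr hs hco h1 h2
end

section
/- Let b ≥ 5 be a squarefree integer and a = r/s with r, s coprime positive integers, 1 < r/s < b, and log_b a irrational. Let α = log_b a and L = {log_b d : d = 1,...,b−1} ⊂ R/Z. Then for every integer i ≥ 2, L ∩ (L − iα) ⊆ L ∩ (L − α), where all sets are taken modulo 1. -/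
open Real

/-!
Write `q = r / s`. A point `log_b d₁ ≡ log_b d₂ - i log_b q` of `L ∩ (L - iα)` means
`d₁ qⁱ = d₂ bⁿ`, and `n ≥ 0` because `d₁ qⁱ ≥ 1 > d₂ b⁻¹`. Coprimality of `r` and `s` gives
`d₁ = t sⁱ`, so `N = d₁ q = t sⁱ⁻¹ r` is an integer. If `N < b` it is already a digit; otherwise
`t rⁱ = d₂ bⁿ` forces `n ≥ 1`, so `b ∣ t rⁱ`, and since `b` is squarefree `b ∣ t r ∣ N`. Then
`N / b < b` is a digit and `d₁ q = (N / b) b`, i.e. `log_b d₁ ∈ L - α`.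
-/

theorem coe_logb_eq_coe_logb_iff {b u v : ℝ} (hb : 1 < b) (hu : 0 < u) (hv : 0 < v) :
    ((logb b u : ℝ) : UnitAddCircle) = (logb b v : ℝ) ↔ ∃ z : ℤ, u = v * b ^ z := by
  rw [← sub_eq_zero, ← AddCircle.coe_sub, AddCircle.coe_eq_zero_iff, ← logb_div hu.ne' hv.ne']
  refine exists_congr fun z => ?_
  rw [zsmul_one, eq_comm, logb_eq_iff_rpow_eq (by linarith) hb.ne' (div_pos hu hv), rpow_intCast,
    eq_div_iff hv.ne', mul_comm, eq_comm]

theorem nonneg_of_one_le_mul_zpow {b c : ℝ} {z : ℤ} (hb : 1 < b) (hc₀ : 0 ≤ c) (hcb : c < b)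
    (h : 1 ≤ c * b ^ z) : 0 ≤ z := by
  by_contra! hz
  have hb₀ : 0 < b := by linarith
  have : b ^ z ≤ b ^ (-1 : ℤ) := zpow_le_zpow_right₀ hb.le (by omega)
  have : c * b ^ z < 1 := calc
    c * b ^ z ≤ c * b ^ (-1 : ℤ) := by gcongr
    _ < b * b ^ (-1 : ℤ) := by gcongr
    _ = 1 := by rw [zpow_neg_one, mul_inv_cancel₀ hb₀.ne']
  linarith

theorem Squarefree.dvd_mul_of_dvd_mul_pow {b t r i : ℕ} (hsf : Squarefree b) (hi : i ≠ 0)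
    (h : b ∣ t * r ^ i) : b ∣ t * r := by
  obtain ⟨j, rfl⟩ := Nat.exists_eq_add_one_of_ne_zero hi
  exact (hsf.dvd_pow_iff_dvd hi).1 (h.trans ⟨t ^ j, by ring⟩)

theorem exists_mul_pow_eq_of_coe_logb_eq {b q x y : ℝ} (hb : 1 < b) (hq : 1 ≤ q) (hx : 1 ≤ x)
    (hy : 0 < y) (hyb : y < b) (i : ℕ)
    (h : ((logb b x : ℝ) : UnitAddCircle) = (logb b (y / q ^ i) : ℝ)) :
    ∃ n : ℕ, x * q ^ i = y * b ^ n := by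
  have hq₀ : 0 < q := by linarith
  obtain ⟨z, hz⟩ := (coe_logb_eq_coe_logb_iff hb (by linarith) (by positivity)).1 h
  have hyq : y / q ^ i < b := (div_le_self hy.le (one_le_pow₀ hq)).trans_lt hyb
  lift z to ℕ using nonneg_of_one_le_mul_zpow hb (by positivity) hyq (hz ▸ hx)
  refine ⟨z, ?_⟩
  rw [hz, zpow_natCast]
  field_simp

theorem exists_digit_of_mul_pow_eq {b r s d₁ d₂ i n : ℕ} (hsf : Squarefree b)
    (hco : r.Coprime s) (hs : 0 < s) (hsr : s ≤ r) (hrb : r ≤ b * s) (hi : i ≠ 0)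
    (hd₁ : 0 < d₁) (hd₁b : d₁ < b) (hd₂b : d₂ < b) (h : d₁ * r ^ i = d₂ * s ^ i * b ^ n) :
    ∃ d₃ m, 0 < d₃ ∧ d₃ < b ∧ d₁ * r = d₃ * s * b ^ m := by
  obtain ⟨t, rfl⟩ : s ^ i ∣ d₁ :=
    (hco.symm.pow i i).dvd_of_dvd_mul_right ⟨d₂ * b ^ n, by rw [h]; ring⟩
  have ht : t * r ^ i = d₂ * b ^ n :=
    Nat.eq_of_mul_eq_mul_left (pow_pos hs i) (by rw [← mul_assoc, h]; ring)
  obtain ⟨j, rfl⟩ := Nat.exists_eq_add_one_of_ne_zero hi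
  have hN : s ^ (j + 1) * t * r = t * s ^ j * r * s := by ring
  have hr : 0 < r := hs.trans_le hsr
  have ht₀ : 0 < t := Nat.pos_of_mul_pos_left hd₁
  rcases lt_or_ge (t * s ^ j * r) b with hNb | hbN
  · exact ⟨t * s ^ j * r, 0, by positivity, hNb, by rw [hN, pow_zero, mul_one]⟩
  have hn : n ≠ 0 := by
    rintro rfl
    rw [pow_zero, mul_one] at ht
    have : t * s ^ j * r ≤ t * r ^ (j + 1) := by rw [pow_succ, ← mul_assoc]; gcongr
    omega
  obtain ⟨d₃, hd₃⟩ : b ∣ t * s ^ j * r := by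
    have := (hsf.dvd_mul_of_dvd_mul_pow hi (ht ▸ dvd_mul_of_dvd_right (dvd_pow_self b hn) d₂))
    exact (this.mul_right (s ^ j)).trans ⟨1, by ring⟩
  refine ⟨d₃, 1, ?_, ?_, by rw [hN, hd₃]; ring⟩
  · exact Nat.pos_of_ne_zero (by rintro rfl; omega)
  · have : b * d₃ * s < b * b * s := calc
      b * d₃ * s = s ^ (j + 1) * t * r := by rw [hN, hd₃]
      _ < b * r := by gcongr
      _ ≤ b * b * s := by rw [mul_assoc]; gcongr
    exact lt_of_mul_lt_mul_left (lt_of_mul_lt_mul_right this (Nat.zero_le s)) (Nat.zero_le b)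

theorem L_inter_sub_subset_general (b r s : ℕ) (hb : 5 ≤ b) (hsf : Squarefree b)
    (hco : Nat.Coprime r s)
    (h1 : (s : ℝ) < r) (h2 : (r : ℝ) < (b : ℝ) * s)
    (i : ℕ) (hi : 2 ≤ i) :
    ({x : UnitAddCircle | ∃ d : ℕ, 1 ≤ d ∧ d ≤ b - 1 ∧
        x = ((Real.logb b d : ℝ) : UnitAddCircle)} ∩
     {x : UnitAddCircle | ∃ d : ℕ, 1 ≤ d ∧ d ≤ b - 1 ∧
        x = ((Real.logb b d - (i : ℝ) * Real.logb b ((r : ℝ) / s) : ℝ) : UnitAddCircle)})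
    ⊆
    ({x : UnitAddCircle | ∃ d : ℕ, 1 ≤ d ∧ d ≤ b - 1 ∧
        x = ((Real.logb b d : ℝ) : UnitAddCircle)} ∩
     {x : UnitAddCircle | ∃ d : ℕ, 1 ≤ d ∧ d ≤ b - 1 ∧
        x = ((Real.logb b d - Real.logb b ((r : ℝ) / s) : ℝ) : UnitAddCircle)}) := by
  rintro x ⟨⟨d₁, hd₁, hd₁b, rfl⟩, ⟨d₂, hd₂, hd₂b, hx⟩⟩
  refine ⟨⟨d₁, hd₁, hd₁b, rfl⟩, ?_⟩
  have hr : (0 : ℝ) < r := s.cast_nonneg.trans_lt h1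
  have hs : (0 : ℝ) < s := pos_of_mul_pos_right (hr.trans h2) b.cast_nonneg
  have hb₁ : (1 : ℝ) < b := by exact_mod_cast (by omega : 1 < b)
  rw [← logb_pow, ← logb_div (by positivity) (by positivity)] at hx
  obtain ⟨n, hn⟩ := exists_mul_pow_eq_of_coe_logb_eq hb₁ ((one_le_div hs).2 h1.le)
    (by exact_mod_cast hd₁) (by positivity) (by exact_mod_cast (by omega : d₂ < b)) i hx
  have hnat : d₁ * r ^ i = d₂ * s ^ i * b ^ n := by
    rw [div_pow] at hn
    field_simp at hn
    exact Nat.cast_injective (R := ℝ) (by push_cast; linear_combination hn)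
  obtain ⟨d₃, m, hd₃, hd₃b, hd⟩ := exists_digit_of_mul_pow_eq hsf hco (Nat.cast_pos.1 hs)
    (by exact_mod_cast h1.le) (by exact_mod_cast h2.le) (by omega) hd₁ (by omega) (by omega) hnat
  refine ⟨d₃, hd₃, by omega, ?_⟩
  rw [← logb_div (by positivity) (by positivity)]
  refine (coe_logb_eq_coe_logb_iff hb₁ (by positivity) (by positivity)).2 ⟨m, ?_⟩
  field_simp
  exact_mod_cast hd

/-- For squarefree `b ≥ 5`, `a = r/s` with `r, s` coprime positive
integers, `1 < r/s < b` and `α = log_b a` irrational, for every `i ≥ 2` we have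
`L ∩ (L - iα) ⊆ L ∩ (L - α)` in `ℝ/ℤ`, where `L = {log_b d : 1 ≤ d ≤ b-1}`. -/
theorem L_inter_sub_subset (b r s : ℕ) (hb : 5 ≤ b) (hsf : Squarefree b)
    (hr : 0 < r) (hs : 0 < s) (hco : Nat.Coprime r s)
    (h1 : (s : ℝ) < r) (h2 : (r : ℝ) < (b : ℝ) * s)
    (hirr : Irrational (Real.logb b ((r : ℝ) / s))) (i : ℕ) (hi : 2 ≤ i) :
    ({x : UnitAddCircle | ∃ d : ℕ, 1 ≤ d ∧ d ≤ b - 1 ∧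
        x = ((Real.logb b d : ℝ) : UnitAddCircle)} ∩
     {x : UnitAddCircle | ∃ d : ℕ, 1 ≤ d ∧ d ≤ b - 1 ∧
        x = ((Real.logb b d - (i : ℝ) * Real.logb b ((r : ℝ) / s) : ℝ) : UnitAddCircle)})
    ⊆
    ({x : UnitAddCircle | ∃ d : ℕ, 1 ≤ d ∧ d ≤ b - 1 ∧
        x = ((Real.logb b d : ℝ) : UnitAddCircle)} ∩
     {x : UnitAddCircle | ∃ d : ℕ, 1 ≤ d ∧ d ≤ b - 1 ∧
        x = ((Real.logb b d - Real.logb b ((r : ℝ) / s) : ℝ) : UnitAddCircle)}) :=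
  L_inter_sub_subset_general b r s hb hsf hco h1 h2 i hi
end

section
/- Let b ≥ 5 be squarefree and a an integer with a > b and gcd(a,b) = 1. Then p_{a,b}(n) = (b−1)·n for all n ≥ 1. -/
/-- The leading digit of `x` in base `b`: the unique `d ∈ {1,…,b-1}` with
`d · b^k ≤ x < (d+1) · b^k` for some integer `k` (here `k = ⌊log_b x⌋`). -/
noncomputable def leadingDigit (b : ℕ) (x : ℝ) : ℕ :=
  (⌊x / (b : ℝ) ^ (⌊Real.logb b x⌋ : ℤ)⌋).toNat

/-- The block complexity of the leading digit sequence of `a^n` in base `b`: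
the number of distinct blocks of length `n`. -/
noncomputable def blockComplexity (a : ℝ) (b : ℕ) (n : ℕ) : ℕ :=
  Set.ncard {w : Fin n → ℕ |
    ∃ m : ℕ, 1 ≤ m ∧ ∀ i : Fin n, w i = leadingDigit b (a ^ (m + (i : ℕ)))}

/-!
Write `α = logb b a`. The leading digit of `a ^ m` is `⌊b ^ fract (m α)⌋`, so the block of
length `n` starting at `a ^ m` depends only on `x = fract (m α) ∈ [0, 1)`: it is
`i ↦ ⌊b ^ fract (x + i α)⌋`. Its `i`-th digit changes exactly when `x + i α` crosses a point
of `logb b d + ℤ` with `1 ≤ d < b`, so the block is constant between consecutive points of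
`{fract (logb b d - i α) | 1 ≤ d < b, i < n}`. These `(b - 1) n` points are distinct, because
for `a > b` coprime to `b`, `d a ^ i' b ^ s = d' a ^ i b ^ t` forces `d = d'` and `i = i'`.
Blocks on different intervals differ: equal leading digits at position `0` force
`|x - y| < logb b 2 ≤ 1 / 2`, and over such a short step a boundary crossed at position `i`
changes the `i`-th digit. Finally `α` is irrational, so the points `fract (m α)`, `m ≥ 1`,
meet every interval.
-/

open Real Set

section FloorRing

variable {R : Type*} [Ring R] [LinearOrder R] [IsStrictOrderedRing R] [FloorRing R]

theorem Int.fract_fract_add (x y : R) : Int.fract (Int.fract x + y) = Int.fract (x + y) :=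
  Int.fract_eq_fract.mpr ⟨-⌊x⌋, by rw [Int.fract]; push_cast; abel⟩

theorem Int.fract_le_fract_of_lt_floor_add_one {s t : R} (hst : s ≤ t) (ht : t < ⌊s⌋ + 1) :
    Int.fract s ≤ Int.fract t := by
  rw [Int.fract, Int.fract, Int.floor_eq_iff.mpr ⟨(Int.floor_le s).trans hst, ht⟩]
  exact sub_le_sub_right hst _

end FloorRing

theorem Irrational.frequently_fract_nat_mul_mem_Ioo {α p q : ℝ} (hα : Irrational α)
    (hp : 0 ≤ p) (hpq : p < q) (hq : q ≤ 1) :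
    ∃ᶠ m : ℕ in Filter.atTop, Int.fract (m * α) ∈ Ioo p q := by
  obtain ⟨c, hc⟩ := exists_between hpq
  have hdense : DenseRange (· • (α : AddCircle (1 : ℝ)) : ℤ → AddCircle (1 : ℝ)) :=
    AddCircle.denseRange_zsmul_coe_iff.mpr (by simpa using hα)
  -- on a compact group, every point of the closure of the `ℤ`-orbit is a cluster point of the
  -- `ℕ`-orbit
  have hcluster : MapClusterPt (c : AddCircle (1 : ℝ)) Filter.atTop
      (· • (α : AddCircle (1 : ℝ))) :=
    ((mapClusterPt_atTop_nsmul_tfae _ _).out 3 0).mp (hdense.closure_range ▸ mem_univ _)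
  have hnhds : ((↑) '' Ioo p q : Set (AddCircle (1 : ℝ))) ∈ nhds (c : AddCircle (1 : ℝ)) :=
    (QuotientAddGroup.isOpenMap_coe _ isOpen_Ioo).mem_nhds ⟨c, hc, rfl⟩
  refine (mapClusterPt_iff_frequently.mp hcluster _ hnhds).mono ?_
  rintro m ⟨t, ht, hmt⟩
  rw [← AddCircle.coe_nsmul, nsmul_eq_mul, ← AddCircle.coe_fract (m * α),
    AddCircle.coe_eq_coe_iff_of_mem_Ico (a := 0) (p := 1)] at hmt
  · rwa [← hmt]
  · simpa using ⟨ht.1.le.trans' hp, ht.2.trans_le hq⟩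
  · simp [Int.fract_lt_one]

theorem Nat.log_mul_pow_of_lt {b d : ℕ} (hd : d ≠ 0) (hdb : d < b) (s : ℕ) :
    Nat.log b (d * b ^ s) = s := by
  refine Nat.log_eq_of_pow_le_of_lt_pow (Nat.le_mul_of_pos_left _ (Nat.pos_of_ne_zero hd)) ?_
  rw [pow_succ, mul_comm]
  exact Nat.mul_lt_mul_of_pos_left hdb (pow_pos (by omega) s)

theorem eq_of_mul_pow_eq_mul_pow {b d d' s t : ℕ} (hd : d ≠ 0) (hdb : d < b) (hd' : d' ≠ 0)
    (hd'b : d' < b) (h : d * b ^ s = d' * b ^ t) : d = d' := by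
  obtain rfl : s = t := by
    rw [← Nat.log_mul_pow_of_lt hd hdb s, h, Nat.log_mul_pow_of_lt hd' hd'b t]
  exact Nat.eq_of_mul_eq_mul_right (pow_pos (by omega) s) h

theorem eq_zero_of_mul_pow_eq {a b d d' k s t : ℕ} (hco : a.Coprime b) (hd : d ≠ 0)
    (hda : d < a) (h : d * b ^ s = d' * a ^ k * b ^ t) : k = 0 := by
  have hdvd : a ^ k ∣ d :=
    (Nat.Coprime.pow k s hco).dvd_of_dvd_mul_right ⟨d' * b ^ t, by rw [h]; ring⟩
  by_contra hk
  have := (Nat.le_self_pow hk a).trans (Nat.le_of_dvd (Nat.pos_of_ne_zero hd) hdvd)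
  omega

theorem eq_and_eq_of_mul_pow_eq {a b d d' i i' s t : ℕ} (hco : a.Coprime b) (hba : b < a)
    (hd : d ∈ Ico 1 b) (hd' : d' ∈ Ico 1 b)
    (h : d * a ^ i' * b ^ s = d' * a ^ i * b ^ t) : d = d' ∧ i = i' := by
  wlog hii : i' ≤ i generalizing d d' i i' s t
  · exact (this hd' hd h.symm (by omega)).imp Eq.symm Eq.symm
  obtain ⟨hd1, hdb⟩ := hd
  obtain ⟨hd1', hdb'⟩ := hd'
  obtain ⟨k, rfl⟩ := Nat.exists_eq_add_of_le hii
  have h' : d * b ^ s = d' * a ^ k * b ^ t := by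
    apply Nat.eq_of_mul_eq_mul_right (pow_pos (by omega : 0 < a) i')
    rw [pow_add] at h
    linarith [h]
  obtain rfl := eq_zero_of_mul_pow_eq hco (by omega) (by omega) h'
  exact ⟨eq_of_mul_pow_eq_mul_pow (by omega) hdb (by omega) hdb' (by simpa using h'), rfl⟩

theorem eq_and_eq_of_fract_logb_sub_mul_logb_eq {a b d d' i i' : ℕ} (hco : a.Coprime b)
    (hba : b < a) (hd : d ∈ Ico 1 b) (hd' : d' ∈ Ico 1 b)
    (h : Int.fract (logb b d - i * logb b a) = Int.fract (logb b d' - i' * logb b a)) :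
    d = d' ∧ i = i' := by
  obtain ⟨z, hz⟩ := Int.fract_eq_fract.mp h
  have hb : (1 : ℝ) < b := by exact_mod_cast hd.1.trans_lt hd.2
  have ha : (0 : ℝ) < a := by exact_mod_cast (Nat.zero_le b).trans_lt hba
  have hd0 : (0 : ℝ) < d := by exact_mod_cast hd.1
  have hd0' : (0 : ℝ) < d' := by exact_mod_cast hd'.1
  have hz' : (z : ℝ) = z.toNat - (-z).toNat := by
    exact_mod_cast (Int.toNat_sub_toNat_neg z).symm
  have hlogz : Real.log d - i * Real.log a - (Real.log d' - i' * Real.log a) =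
      (z.toNat - (-z).toNat) * Real.log b := by
    rw [← hz', ← hz]
    simp only [logb]
    field_simp [(Real.log_pos hb).ne']
  refine eq_and_eq_of_mul_pow_eq (s := (-z).toNat) (t := z.toNat) hco hba hd hd' ?_
  have hlog : Real.log (d * a ^ i' * b ^ (-z).toNat) = Real.log (d' * a ^ i * b ^ z.toNat) := by
    rw [Real.log_mul (by positivity) (by positivity), Real.log_mul (by positivity) (by positivity),
      Real.log_mul (by positivity) (by positivity), Real.log_mul (by positivity) (by positivity)]
    simp only [Real.log_pow]
    linarith
  exact_mod_cast Real.log_injOn_pos (by simp; positivity) (by simp; positivity) hlog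

theorem irrational_logb_of_coprime {a b : ℕ} (hco : a.Coprime b) (hb : 1 < b) (hba : b < a) :
    Irrational (logb b a) := by
  rintro ⟨r, hr⟩
  refine r.den_nz (eq_and_eq_of_fract_logb_sub_mul_logb_eq (d := 1) (d' := 1) (i' := 0) hco hba
    ⟨le_rfl, hb⟩ ⟨le_rfl, hb⟩ ?_).2
  have : (r.den : ℝ) * logb b a = r.num := by
    rw [← hr]
    exact_mod_cast Rat.den_mul_eq_num r
  simp [this, Int.fract_neg_eq_zero]

theorem logb_mem_Ico {b d : ℕ} (hd : d ∈ Ico 1 b) : logb b d ∈ Ico 0 1 := by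
  have hb : (1 : ℝ) < b := by exact_mod_cast hd.1.trans_lt hd.2
  refine ⟨logb_nonneg hb (by exact_mod_cast hd.1), ?_⟩
  rw [logb_lt_iff_lt_rpow hb (by exact_mod_cast hd.1), rpow_one]
  exact_mod_cast hd.2

noncomputable def leadingDigitOfLog (b : ℕ) (t : ℝ) : ℕ := ⌊(b : ℝ) ^ Int.fract t⌋₊

theorem leadingDigit_eq_leadingDigitOfLog {b : ℕ} (hb : 1 < b) {x : ℝ} (hx : 0 < x) :
    leadingDigit b x = leadingDigitOfLog b (logb b x) := by
  have hb0 : (0 : ℝ) < b := by positivity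
  have hb1 : (b : ℝ) ≠ 1 := by exact_mod_cast hb.ne'
  rw [leadingDigit, leadingDigitOfLog, Int.floor_toNat, ← Int.self_sub_floor, rpow_sub hb0,
    rpow_logb hb0 hb1 hx, rpow_intCast]

def digitBoundary (b : ℕ) : Set ℝ := {t | ∃ d ∈ Ico 1 b, Int.fract t = logb b d}

theorem exists_mem_digitBoundary_iff {b : ℕ} {s t : ℝ} (hst : s ≤ t) (ht : t < ⌊s⌋ + 1) :
    (∃ u ∈ Ioc s t, u ∈ digitBoundary b) ↔
      ∃ d ∈ Ico 1 b, logb b d ∈ Ioc (Int.fract s) (Int.fract t) := by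
  have hfract : ∀ u, s ≤ u → u ≤ t → Int.fract u = u - ⌊s⌋ := fun u hsu hut => by
    rw [Int.fract, Int.floor_eq_iff.mpr ⟨(Int.floor_le s).trans hsu, hut.trans_lt ht⟩]
  constructor
  · rintro ⟨u, hu, d, hd, hud⟩
    refine ⟨d, hd, ?_⟩
    rw [← hud, hfract u hu.1.le hu.2, hfract t hst le_rfl, Int.fract]
    exact ⟨by linarith [hu.1], by linarith [hu.2]⟩
  · rintro ⟨d, hd, hds, hdt⟩
    rw [Int.fract] at hds
    rw [hfract t hst le_rfl] at hdt
    refine ⟨⌊s⌋ + logb b d, ⟨by linarith, by linarith⟩, d, hd, ?_⟩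
    rw [Int.fract_intCast_add, Int.fract_eq_self]
    exact ⟨(logb_mem_Ico hd).1, by linarith⟩

section LeadingDigitOfLog

variable {b : ℕ} (hb : 1 < b)
include hb

theorem le_leadingDigitOfLog_iff {d : ℕ} (hd : d ≠ 0) (t : ℝ) :
    d ≤ leadingDigitOfLog b t ↔ logb b d ≤ Int.fract t := by
  rw [leadingDigitOfLog, Nat.le_floor_iff (by positivity),
    logb_le_iff_le_rpow (by exact_mod_cast hb) (by positivity)]

theorem leadingDigitOfLog_pos (t : ℝ) : 0 < leadingDigitOfLog b t :=
  (le_leadingDigitOfLog_iff hb one_ne_zero t).mpr (by simp [Int.fract_nonneg])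

theorem logb_leadingDigitOfLog_le (t : ℝ) : logb b (leadingDigitOfLog b t) ≤ Int.fract t :=
  (le_leadingDigitOfLog_iff hb (leadingDigitOfLog_pos hb t).ne' t).mp le_rfl

theorem leadingDigitOfLog_lt (t : ℝ) : leadingDigitOfLog b t < b := by
  refine not_le.mp fun h => (Int.fract_lt_one t).not_ge ?_
  simpa [logb_self_eq_one (show (1 : ℝ) < b by exact_mod_cast hb)] using
    (le_leadingDigitOfLog_iff hb (by omega) t).mp h

theorem abs_fract_sub_fract_lt_logb_two {s t : ℝ}
    (h : leadingDigitOfLog b s = leadingDigitOfLog b t) :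
    |Int.fract s - Int.fract t| < logb b 2 := by
  set e := leadingDigitOfLog b s
  have he : 0 < e := leadingDigitOfLog_pos hb s
  have hlo : ∀ u, leadingDigitOfLog b u = e → logb b e ≤ Int.fract u := fun u hu =>
    hu ▸ logb_leadingDigitOfLog_le hb u
  have hhi : ∀ u, leadingDigitOfLog b u = e → Int.fract u < logb b (e + 1 : ℕ) := fun u hu =>
    not_le.mp fun h' => by simpa [hu] using (le_leadingDigitOfLog_iff hb e.succ_ne_zero u).mpr h'
  have hgap : logb b (e + 1 : ℕ) - logb b e ≤ logb b 2 := by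
    rw [← logb_div (by positivity) (by positivity)]
    refine logb_le_logb_of_le (by exact_mod_cast hb) (by positivity) ?_
    rw [div_le_iff₀ (by positivity)]
    push_cast
    linarith [show (1 : ℝ) ≤ e by exact_mod_cast he]
  rw [abs_sub_lt_iff]
  constructor <;> linarith [hlo s rfl, hlo t h.symm, hhi s rfl, hhi t h.symm]

theorem leadingDigitOfLog_eq_iff_of_fract_le {s t : ℝ} (hst : Int.fract s ≤ Int.fract t) :
    leadingDigitOfLog b s = leadingDigitOfLog b t ↔
      ∀ d ∈ Ico 1 b, logb b d ∉ Ioc (Int.fract s) (Int.fract t) := by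
  constructor
  · rintro h d ⟨hd, -⟩ ⟨hsd, hdt⟩
    have hdt' := (le_leadingDigitOfLog_iff hb (by omega) t).mpr hdt
    exact hsd.not_ge ((le_leadingDigitOfLog_iff hb (by omega) s).mp (h ▸ hdt'))
  · intro h
    refine le_antisymm ?_ ?_
    · exact (le_leadingDigitOfLog_iff hb (leadingDigitOfLog_pos hb s).ne' t).mpr
        ((logb_leadingDigitOfLog_le hb s).trans hst)
    · refine (le_leadingDigitOfLog_iff hb (leadingDigitOfLog_pos hb t).ne' s).mpr
        (not_lt.mp fun hlt => ?_)
      exact h _ ⟨leadingDigitOfLog_pos hb t, leadingDigitOfLog_lt hb t⟩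
        ⟨hlt, logb_leadingDigitOfLog_le hb t⟩

theorem leadingDigitOfLog_eq_of_forall_notMem_digitBoundary {s t : ℝ} (hst : s ≤ t)
    (h : ∀ u ∈ Ioc s t, u ∉ digitBoundary b) :
    leadingDigitOfLog b s = leadingDigitOfLog b t := by
  have ht : t < ⌊s⌋ + 1 := by
    by_contra! ht
    exact h (⌊s⌋ + 1) ⟨Int.lt_floor_add_one s, ht⟩ ⟨1, ⟨le_rfl, hb⟩, by simp⟩
  rw [leadingDigitOfLog_eq_iff_of_fract_le hb (Int.fract_le_fract_of_lt_floor_add_one hst ht)]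
  intro d hd hlog
  obtain ⟨u, hu, hub⟩ := (exists_mem_digitBoundary_iff hst ht).mpr ⟨d, hd, hlog⟩
  exact h u hu hub

theorem forall_notMem_digitBoundary_of_leadingDigitOfLog_eq {s t : ℝ} (hst : s ≤ t)
    (hts : t - s ≤ 1 - logb b 2) (h : leadingDigitOfLog b s = leadingDigitOfLog b t) :
    ∀ u ∈ Ioc s t, u ∉ digitBoundary b := by
  have hclose := abs_fract_sub_fract_lt_logb_two hb h
  -- past the next integer, `fract s - fract t` would be at least `1 - (t - s) ≥ logb b 2`
  have ht : t < ⌊s⌋ + 1 := by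
    by_contra! ht
    have hfl : (⌊s⌋ : ℝ) + 1 ≤ ⌊t⌋ := by
      exact_mod_cast Int.le_floor.mpr (by push_cast; exact ht)
    rw [abs_sub_lt_iff, Int.fract, Int.fract] at hclose
    linarith [hclose.1]
  rw [leadingDigitOfLog_eq_iff_of_fract_le hb (Int.fract_le_fract_of_lt_floor_add_one hst ht)] at h
  rintro u hu hub
  obtain ⟨d, hd, hlog⟩ := (exists_mem_digitBoundary_iff hst ht).mp ⟨u, hu, hub⟩
  exact h d hd hlog

end LeadingDigitOfLog

theorem logb_two_le_half {b : ℕ} (hb : 4 ≤ b) : logb b 2 ≤ 1 / 2 := by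
  have hb1 : (1 : ℝ) < b := by exact_mod_cast (by omega : 1 < b)
  have h4 : logb b 4 ≤ 1 := by
    rw [← logb_self_eq_one hb1]
    exact logb_le_logb_of_le hb1 (by norm_num) (by exact_mod_cast hb)
  have h22 : logb b 4 = 2 * logb b 2 := by
    rw [show (4 : ℝ) = 2 ^ 2 by norm_num, logb_pow]
    push_cast
    ring
  linarith

section StepFunction

variable {α W : Type*} [LinearOrder α]

/-- On `[lo, hi)`, the level sets of `f` are the intervals `[β, β')` between consecutive points
of `B`. -/
def IsStepFunctionOn (f : α → W) (B : Finset α) (lo hi : α) : Prop :=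
  ∀ x y, lo ≤ x → x ≤ y → y < hi → (f x = f y ↔ ∀ β ∈ B, β ∉ Ioc x y)

variable {f : α → W} {B : Finset α} {lo hi : α} {S : Set α}

theorem IsStepFunctionOn.injOn (hf : IsStepFunctionOn f B lo hi) (hB : ↑B ⊆ Ico lo hi) :
    InjOn f B := by
  intro x hx y hy hxy
  wlog hle : x ≤ y generalizing x y
  · exact (this hy hx hxy.symm (le_of_not_ge hle)).symm
  by_contra hne
  exact (hf x y (hB hx).1 hle (hB hy).2).mp hxy y hy ⟨lt_of_le_of_ne hle hne, le_rfl⟩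

theorem IsStepFunctionOn.image_subset_image (hf : IsStepFunctionOn f B lo hi)
    (hB : ↑B ⊆ Ico lo hi) (hlo : lo ∈ B) (hS : S ⊆ Ico lo hi) :
    f '' S ⊆ f '' B := by
  rintro _ ⟨x, hx, rfl⟩
  have hne : (B.filter (· ≤ x)).Nonempty := ⟨lo, Finset.mem_filter.mpr ⟨hlo, (hS hx).1⟩⟩
  obtain ⟨hpB, hpx⟩ := Finset.mem_filter.mp (Finset.max'_mem _ hne)
  refine ⟨_, hpB, (hf _ x (hB hpB).1 hpx (hS hx).2).mpr fun β hβ hβx => ?_⟩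
  exact hβx.1.not_ge (Finset.le_max' _ β (Finset.mem_filter.mpr ⟨hβ, hβx.2⟩))

theorem IsStepFunctionOn.image_subset_image_of_dense (hf : IsStepFunctionOn f B lo hi)
    (hB : ↑B ⊆ Ico lo hi) (hS : S ⊆ Ico lo hi)
    (hdense : ∀ p q, lo ≤ p → p < q → q ≤ hi → (S ∩ Ioo p q).Nonempty) :
    f '' B ⊆ f '' S := by
  rintro _ ⟨β, hβ, rfl⟩
  let T := insert hi (B.filter (β < ·))
  have hT : T.Nonempty := Finset.insert_nonempty _ _
  have hβT : β < T.min' hT := by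
    obtain h | h := Finset.mem_insert.mp (T.min'_mem hT)
    · exact h ▸ (hB hβ).2
    · exact (Finset.mem_filter.mp h).2
  obtain ⟨x, hxS, hx⟩ :=
    hdense β _ (hB hβ).1 hβT (T.min'_le hi (Finset.mem_insert_self _ _))
  refine ⟨x, hxS, ((hf β x (hB hβ).1 hx.1.le (hS hxS).2).mpr fun γ hγ hγx => ?_).symm⟩
  have hγT : γ ∈ T := Finset.mem_insert_of_mem (Finset.mem_filter.mpr ⟨hγ, hγx.1⟩)
  exact (hγx.2.trans_lt hx.2).not_ge (T.min'_le γ hγT)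

theorem IsStepFunctionOn.ncard_image_of_dense (hf : IsStepFunctionOn f B lo hi)
    (hB : ↑B ⊆ Ico lo hi) (hlo : lo ∈ B) (hS : S ⊆ Ico lo hi)
    (hdense : ∀ p q, lo ≤ p → p < q → q ≤ hi → (S ∩ Ioo p q).Nonempty) :
    (f '' S).ncard = B.card := by
  rw [(hf.image_subset_image hB hlo hS).antisymm (hf.image_subset_image_of_dense hB hS hdense),
    (hf.injOn hB).ncard_image, Set.ncard_coe_finset]

end StepFunction

noncomputable def leadingDigitWord (b n : ℕ) (α x : ℝ) : Fin n → ℕ :=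
  fun i => leadingDigitOfLog b (x + i * α)

noncomputable def wordBoundary (b n : ℕ) (α : ℝ) : Finset ℝ :=
  (Finset.Ico 1 b ×ˢ Finset.range n).image fun p => Int.fract (logb b p.1 - p.2 * α)

section WordBoundary

variable {b n : ℕ} {α : ℝ}

theorem coe_wordBoundary_subset : ↑(wordBoundary b n α) ⊆ Ico (0 : ℝ) 1 := by
  intro β hβ
  obtain ⟨_, -, rfl⟩ := Finset.mem_image.mp hβ
  exact ⟨Int.fract_nonneg _, Int.fract_lt_one _⟩

theorem zero_mem_wordBoundary (hb : 1 < b) (hn : n ≠ 0) : 0 ∈ wordBoundary b n α :=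
  Finset.mem_image.mpr ⟨(1, 0), by simp [hb, Nat.pos_of_ne_zero hn], by simp⟩

theorem mem_wordBoundary_iff {β : ℝ} (hβ : β ∈ Ico 0 1) :
    β ∈ wordBoundary b n α ↔ ∃ i < n, β + i * α ∈ digitBoundary b := by
  simp only [wordBoundary, Finset.mem_image, Finset.mem_product, Finset.mem_Ico,
    Finset.mem_range, Prod.exists]
  constructor
  · rintro ⟨d, i, ⟨hd, hi⟩, rfl⟩
    refine ⟨i, hi, d, hd, ?_⟩
    rw [Int.fract_fract_add, sub_add_cancel, Int.fract_eq_self]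
    exact logb_mem_Ico hd
  · rintro ⟨i, hi, d, hd, hfr⟩
    refine ⟨d, i, ⟨hd, hi⟩, ?_⟩
    rw [← hfr, sub_eq_add_neg, Int.fract_fract_add, add_neg_cancel_right, Int.fract_eq_self]
    exact hβ

theorem card_wordBoundary {a : ℕ} (hco : a.Coprime b) (hba : b < a) :
    (wordBoundary b n (logb b a)).card = (b - 1) * n := by
  rw [wordBoundary, Finset.card_image_of_injOn, Finset.card_product, Nat.card_Ico,
    Finset.card_range]
  rintro ⟨d, i⟩ hdi ⟨d', i'⟩ hdi' h
  simp only [Finset.coe_product, mem_prod, Finset.coe_Ico, Finset.coe_range, mem_Iio] at hdi hdi'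
  obtain ⟨rfl, rfl⟩ := eq_and_eq_of_fract_logb_sub_mul_logb_eq hco hba hdi.1 hdi'.1 h
  rfl

theorem isStepFunctionOn_leadingDigitWord (hb : 4 ≤ b) (hn : n ≠ 0) (α : ℝ) :
    IsStepFunctionOn (leadingDigitWord b n α) (wordBoundary b n α) 0 1 := by
  intro x y hx hxy hy
  have hb1 : 1 < b := by omega
  have hmem : ∀ β ∈ Ioc x y, β ∈ Ico 0 1 := fun β hβ =>
    ⟨hx.trans hβ.1.le, hβ.2.trans_lt hy⟩
  constructor
  · intro h β hβB hβ
    -- the leading digits at position `0` force `y - x < logb b 2 ≤ 1 / 2`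
    have h0 : leadingDigitOfLog b x = leadingDigitOfLog b y := by
      simpa [leadingDigitWord] using congrFun h ⟨0, Nat.pos_of_ne_zero hn⟩
    have hclose := abs_fract_sub_fract_lt_logb_two hb1 h0
    rw [Int.fract_eq_self.mpr ⟨hx, hxy.trans_lt hy⟩,
      Int.fract_eq_self.mpr ⟨hx.trans hxy, hy⟩, abs_sub_lt_iff] at hclose
    have hhalf := logb_two_le_half hb
    obtain ⟨i, hi, hbd⟩ := (mem_wordBoundary_iff (hmem β hβ)).mp hβB
    exact forall_notMem_digitBoundary_of_leadingDigitOfLog_eq hb1 (by linarith) (by linarith)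
      (congrFun h ⟨i, hi⟩) _ ⟨by linarith [hβ.1], by linarith [hβ.2]⟩ hbd
  · intro h
    funext i
    refine leadingDigitOfLog_eq_of_forall_notMem_digitBoundary hb1 (by linarith) fun u hu hub => ?_
    have hu' : u - i * α ∈ Ioc x y := ⟨by linarith [hu.1], by linarith [hu.2]⟩
    exact h _ ((mem_wordBoundary_iff (hmem _ hu')).mpr ⟨i, i.2, by simpa using hub⟩) hu'

end WordBoundary

theorem setOf_leadingDigit_blocks_eq_image {a b : ℕ} (hb : 1 < b) (ha : 0 < a) (n : ℕ) :
    {w : Fin n → ℕ |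
        ∃ m : ℕ, 1 ≤ m ∧ ∀ i : Fin n, w i = leadingDigit b (a ^ (m + (i : ℕ)))} =
      leadingDigitWord b n (logb b a) '' ((fun m : ℕ => Int.fract (m * logb b a)) '' Ici 1) := by
  have hword : ∀ m : ℕ, leadingDigitWord b n (logb b a) (Int.fract (m * logb b a)) =
      fun i : Fin n => leadingDigit b ((a : ℝ) ^ (m + (i : ℕ))) := fun m => by
    funext i
    rw [leadingDigit_eq_leadingDigitOfLog hb (by positivity), leadingDigitWord, leadingDigitOfLog,
      leadingDigitOfLog, Int.fract_fract_add, logb_pow]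
    push_cast
    ring_nf
  rw [image_image]
  ext w
  simp [hword, funext_iff, eq_comm]

theorem blockComplexity_int_gt_general (b a : ℕ) (hb : 5 ≤ b)
    (ha : b < a) (hco : Nat.gcd a b = 1) :
    ∀ n : ℕ, 1 ≤ n → blockComplexity (a : ℝ) b n = (b - 1) * n := by
  intro n hn
  let S := (fun m : ℕ => Int.fract (m * logb b a)) '' Ici 1
  have hS : S ⊆ Ico 0 1 := by
    rintro _ ⟨m, -, rfl⟩
    exact ⟨Int.fract_nonneg _, Int.fract_lt_one _⟩
  have hdense : ∀ p q, 0 ≤ p → p < q → q ≤ 1 → (S ∩ Ioo p q).Nonempty := by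
    intro p q hp hpq hq
    obtain ⟨m, hm, hmpq⟩ := ((irrational_logb_of_coprime hco (by omega) ha
      ).frequently_fract_nat_mul_mem_Ioo hp hpq hq).forall_exists_of_atTop 1
    exact ⟨_, ⟨m, hm, rfl⟩, hmpq⟩
  rw [blockComplexity, setOf_leadingDigit_blocks_eq_image (by omega) (by omega),
    (isStepFunctionOn_leadingDigitWord (by omega) (by omega) _).ncard_image_of_dense
      coe_wordBoundary_subset (zero_mem_wordBoundary (by omega) (by omega)) hS hdense,
    card_wordBoundary hco ha]

/-- For squarefree `b ≥ 5` and an integer `a > b` with `gcd(a,b) = 1`,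
`p_{a,b}(n) = (b-1)·n` for all `n ≥ 1`. -/
theorem blockComplexity_int_gt (b a : ℕ) (hb : 5 ≤ b) (hsf : Squarefree b)
    (ha : b < a) (hco : Nat.gcd a b = 1) :
    ∀ n : ℕ, 1 ≤ n → blockComplexity (a : ℝ) b n = (b - 1) * n :=
  blockComplexity_int_gt_general b a hb ha hco
end

section
/- Let b be a squarefree integer ≥ 5. Then the block complexity of the leading digit sequence of 2^n in base b is p_{2,b}(n) = ⌊(b−1)/2⌋·n + ⌈(b−1)/2⌉ for all n ≥ 1. -/
open Real Set

namespace LeadingDigits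

noncomputable def digit (b : ℕ) (t : ℝ) : ℕ := ⌊(b : ℝ) ^ t⌋₊

variable {b : ℕ}

lemma le_digit_iff (hb : 1 < b) {d : ℕ} (hd : 1 ≤ d) (t : ℝ) :
    d ≤ digit b t ↔ logb b d ≤ t := by
  rw [digit, Nat.le_floor_iff (by positivity),
    logb_le_iff_le_rpow (by exact_mod_cast hb) (by exact_mod_cast hd)]

lemma digit_lt_iff (hb : 1 < b) {d : ℕ} (hd : 1 ≤ d) (t : ℝ) :
    digit b t < d ↔ t < logb b d := by
  simpa only [not_le] using (le_digit_iff hb hd t).not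

lemma digit_mono (hb : 1 < b) : Monotone (digit b) := fun _ _ h =>
  Nat.floor_mono (rpow_le_rpow_of_exponent_le (by exact_mod_cast hb.le) h)

lemma one_le_digit (hb : 1 < b) {t : ℝ} (ht : 0 ≤ t) : 1 ≤ digit b t :=
  (le_digit_iff hb le_rfl t).2 (by simpa using ht)

lemma digit_lt (hb : 1 < b) {t : ℝ} (ht : t < 1) : digit b t < b :=
  (digit_lt_iff hb hb.le t).2 (by rwa [logb_self_eq_one (by exact_mod_cast hb)])

lemma logb_mem_Ico (hb : 1 < b) {d : ℕ} (hd : d ∈ Finset.Icc 1 (b - 1)) :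
    logb b d ∈ Ico 0 1 := by
  rw [Finset.mem_Icc] at hd
  have hb' : (1 : ℝ) < b := by exact_mod_cast hb
  refine ⟨logb_nonneg hb' (by exact_mod_cast hd.1), ?_⟩
  rw [← logb_self_eq_one hb']
  exact logb_lt_logb hb' (by exact_mod_cast hd.1) (by exact_mod_cast (by omega : d < b))

/-- The digit cell `[logb b d, logb b (d + 1))` is longest for `d = 1`. -/
lemma abs_sub_lt_of_digit_eq (hb : 1 < b) {u u' : ℝ} (hu : 0 ≤ u)
    (h : digit b u = digit b u') : |u - u'| < logb b 2 := by
  set d := digit b u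
  have hd : 1 ≤ d := one_le_digit hb hu
  have hb' : (1 : ℝ) < b := by exact_mod_cast hb
  have hcell : logb b (d + 1 : ℕ) - logb b d ≤ logb b 2 := by
    have hd' : (1 : ℝ) ≤ d := by exact_mod_cast hd
    rw [← logb_div (by positivity) (by positivity)]
    refine logb_le_logb_of_le hb' (by positivity) ?_
    rw [div_le_iff₀ (by positivity)]
    push_cast
    linarith
  have h1 := (le_digit_iff hb hd u).1 le_rfl
  have h2 := (digit_lt_iff hb (by omega : 1 ≤ d + 1) u).1 (by omega)
  have h1' := (le_digit_iff hb hd u').1 h.le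
  have h2' := (digit_lt_iff hb (by omega : 1 ≤ d + 1) u').1 (by omega)
  rw [abs_lt]
  constructor <;> linarith

lemma logb_two_lt_half (hb : 4 < b) : logb b 2 < 1 / 2 := by
  have hb' : (1 : ℝ) < b := by exact_mod_cast (by omega : 1 < b)
  have h4 : logb b 4 < 1 := by
    rw [← logb_self_eq_one hb']
    exact logb_lt_logb hb' (by norm_num) (by exact_mod_cast hb)
  have : logb b 4 = 2 * logb b 2 := by
    rw [show (4 : ℝ) = 2 ^ 2 by norm_num, logb_pow]
    push_cast
    ring
  linarith

lemma leadingDigit_eq_digit_fract (hb : 1 < b) {x : ℝ} (hx : 0 < x) :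
    leadingDigit b x = digit b (Int.fract (logb b x)) := by
  have hb' : (0 : ℝ) < b := by exact_mod_cast (by omega : 0 < b)
  have hscale : x / (b : ℝ) ^ ⌊logb b x⌋ = (b : ℝ) ^ Int.fract (logb b x) := by
    rw [← Int.self_sub_floor, rpow_sub hb', rpow_logb hb' (by exact_mod_cast hb.ne') hx,
      rpow_intCast]
  rw [leadingDigit, hscale, Int.floor_toNat, digit]

lemma irrational_logb_two (hb : 3 ≤ b) (hsf : Squarefree b) : Irrational (logb b 2) := by
  rintro ⟨r, hr⟩
  have hb' : (1 : ℝ) < b := by exact_mod_cast (by omega : 1 < b)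
  have hpos : 0 < r := by
    have : 0 < logb b 2 := logb_pos hb' (by norm_num)
    rw [← hr] at this
    exact_mod_cast this
  have hnum : 0 < r.num := Rat.num_pos.2 hpos
  have hlog : logb b ((2 : ℝ) ^ r.den) = r.num.toNat := by
    have hnum' : ((r.num.toNat : ℕ) : ℝ) = r.num := by exact_mod_cast Int.toNat_of_nonneg hnum.le
    rw [logb_pow, ← hr, hnum', Rat.cast_def]
    field_simp
  have hpow : (2 : ℝ) ^ r.den = (b : ℝ) ^ r.num.toNat := by
    rw [← rpow_natCast (b : ℝ), ← hlog, rpow_logb (by positivity) hb'.ne' (by positivity)]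
  have hdvd : b ∣ 2 ^ r.den := by
    have hnat : 2 ^ r.den = b ^ r.num.toNat := by exact_mod_cast hpow
    rw [hnat]
    exact dvd_pow_self b (by omega)
  obtain ⟨m, -, rfl⟩ := (Nat.dvd_prime_pow Nat.prime_two).1 hdvd
  have hm : m < 2 := by
    by_contra! hm
    have := hsf 2 (pow_dvd_pow 2 hm)
    norm_num at this
  interval_cases m <;> omega

lemma exists_fract_nat_mul_mem_Ioo {α : ℝ} (hα : Irrational α) {u v : ℝ} (hu : 0 ≤ u)
    (huv : u < v) (hv : v ≤ 1) : ∃ m : ℕ, Int.fract (m * α) ∈ Ioo u v := by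
  have hdense : DenseRange (fun m : ℕ => m • (α : AddCircle (1 : ℝ))) :=
    denseRange_zsmul_iff_nsmul.1 (AddCircle.denseRange_zsmul_coe_iff.2 (by simpa using hα))
  obtain ⟨m, y, hy, hmy⟩ := hdense.exists_mem_open
    (QuotientAddGroup.isOpenMap_coe _ isOpen_Ioo) ((nonempty_Ioo.2 huv).image _)
  refine ⟨m, ?_⟩
  have hyI : y ∈ Ico (0 : ℝ) (0 + 1) := ⟨hu.trans hy.1.le, by linarith [hy.2]⟩
  have hfI : Int.fract (m * α) ∈ Ico (0 : ℝ) (0 + 1) :=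
    ⟨Int.fract_nonneg _, by simpa using Int.fract_lt_one _⟩
  rw [← (AddCircle.coe_eq_coe_iff_of_mem_Ico hyI hfI).1 (by simpa [AddCircle.coe_fract] using hmy)]
  exact hy

lemma fract_mem_iff_exists_add_intCast_mem {s : Set ℝ} (hs : s ⊆ Ico 0 1) (y : ℝ) :
    Int.fract y ∈ s ↔ ∃ k : ℤ, y + k ∈ s := by
  refine ⟨fun h => ⟨-⌊y⌋, by simpa [← sub_eq_add_neg] using h⟩, ?_⟩
  rintro ⟨k, hk⟩
  rwa [← Int.fract_add_intCast y k, Int.fract_eq_self.2 (hs hk)]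

lemma digit_fract_eq_of_forall_notMem (hb : 1 < b) {x x' : ℝ} (hxx : x ≤ x')
    (h : ∀ d ∈ Finset.Icc 1 (b - 1), ∀ k : ℤ, logb b d + k ∉ Ioc x x') :
    digit b (Int.fract x) = digit b (Int.fract x') := by
  have hfloor : ⌊x⌋ = ⌊x'⌋ := by
    refine le_antisymm (Int.floor_mono hxx) (Int.le_floor.2 (not_lt.1 fun hlt => ?_))
    exact h 1 (Finset.mem_Icc.2 ⟨le_rfl, by omega⟩) ⌊x'⌋
      ⟨by simpa using hlt, by simpa using Int.floor_le x'⟩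
  have hfract : Int.fract x ≤ Int.fract x' := by
    rw [Int.fract, Int.fract, hfloor]
    linarith
  refine le_antisymm (digit_mono hb hfract) (not_lt.1 fun hlt => ?_)
  set e := digit b (Int.fract x')
  have he : 1 ≤ e := one_le_digit hb (Int.fract_nonneg _)
  have hlow := (digit_lt_iff hb he _).1 hlt
  have hhigh := (le_digit_iff hb he _).1 le_rfl
  refine h e (Finset.mem_Icc.2 ⟨he, by have := digit_lt hb (Int.fract_lt_one x'); omega⟩) ⌊x⌋
    ⟨?_, ?_⟩
  · linarith [Int.floor_add_fract x]
  · rw [hfloor]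
    linarith [Int.floor_add_fract x']

lemma forall_notMem_of_digit_fract_eq (hb : 1 < b) {x x' : ℝ} (hxx : x ≤ x')
    (hlen : x' - x < 1 - logb b 2) (h : digit b (Int.fract x) = digit b (Int.fract x')) :
    ∀ d ∈ Finset.Icc 1 (b - 1), ∀ k : ℤ, logb b d + k ∉ Ioc x x' := by
  intro d hd k hk
  have hα : 0 < logb b 2 := logb_pos (by exact_mod_cast hb) (by norm_num)
  have hgap := abs_sub_lt_of_digit_eq hb (Int.fract_nonneg x) h
  have hdI := logb_mem_Ico hb hd
  have hx := Int.floor_add_fract x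
  have hx' := Int.floor_add_fract x'
  have hfx := Int.fract_nonneg x
  have hfx' := Int.fract_lt_one x'
  have hfloor : ⌊x'⌋ = ⌊x⌋ ∨ ⌊x'⌋ = ⌊x⌋ + 1 := by
    have h1 := Int.floor_mono hxx
    have h2 : ⌊x'⌋ ≤ ⌊x⌋ + 1 := by
      rw [← Int.floor_add_one]
      exact Int.floor_mono (by linarith)
    omega
  rcases hfloor with hsame | hwrap
  · rw [hsame] at hx'
    have hkx : k = ⌊x⌋ := by
      have h1 : (k : ℝ) < ⌊x⌋ + 1 := by linarith [hk.2, hdI.1]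
      have h2 : (⌊x⌋ : ℝ) < k + 1 := by linarith [hk.1, hdI.2]
      have h1' : k < ⌊x⌋ + 1 := by exact_mod_cast h1
      have h2' : ⌊x⌋ < k + 1 := by exact_mod_cast h2
      omega
    have hd1 : 1 ≤ d := (Finset.mem_Icc.1 hd).1
    rw [hkx] at hk
    have hlt := (digit_lt_iff hb hd1 _).2 (show Int.fract x < logb b d by linarith [hk.1])
    have hle := (le_digit_iff hb hd1 _).2 (show logb b d ≤ Int.fract x' by linarith [hk.2])
    omega
  · -- wrapping past an integer would force `fract x - fract x' = 1 - (x' - x) > logb b 2`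
    rw [hwrap] at hx'
    push_cast at hx'
    rw [abs_lt] at hgap
    linarith [hgap.2]

noncomputable def word (b n : ℕ) (t : ℝ) : Fin n → ℕ :=
  fun i => digit b (Int.fract (t + i * logb b 2))

def digitPairs (b n : ℕ) : Finset (ℕ × ℕ) := Finset.Icc 1 (b - 1) ×ˢ Finset.range n

noncomputable def breakpoint (b : ℕ) (p : ℕ × ℕ) : ℝ := Int.fract (logb b p.1 - p.2 * logb b 2)

noncomputable def breakpoints (b n : ℕ) : Finset ℝ := (digitPairs b n).image (breakpoint b)

lemma mem_digitPairs {n d i : ℕ} : (d, i) ∈ digitPairs b n ↔ 1 ≤ d ∧ d ≤ b - 1 ∧ i < n := by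
  simp only [digitPairs, Finset.mem_product, Finset.mem_Icc, Finset.mem_range, and_assoc]

lemma breakpoint_mem_Ioc_iff {t t' : ℝ} (ht : 0 ≤ t) (ht' : t' < 1) (d i : ℕ) :
    breakpoint b (d, i) ∈ Ioc t t' ↔
      ∃ k : ℤ, logb b d + k ∈ Ioc (t + i * logb b 2) (t' + i * logb b 2) := by
  rw [breakpoint, fract_mem_iff_exists_add_intCast_mem
    (fun y hy => ⟨ht.trans hy.1.le, hy.2.trans_lt ht'⟩)]
  refine exists_congr fun k => ?_
  simp only [mem_Ioc]
  constructor <;> rintro ⟨h1, h2⟩ <;> constructor <;> linarith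

lemma word_eq_iff (hb : 4 < b) {n : ℕ} (hn : n ≠ 0) {t t' : ℝ} (ht : 0 ≤ t) (htt : t ≤ t')
    (ht' : t' < 1) : word b n t = word b n t' ↔ ∀ x ∈ breakpoints b n, x ∉ Ioc t t' := by
  have hb1 : 1 < b := by omega
  simp only [breakpoints, Finset.mem_image, forall_exists_index, and_imp, Prod.forall,
    mem_digitPairs]
  constructor
  · rintro h x d i hd1 hd2 hi rfl hmem
    have hfirst : digit b t = digit b t' := by
      simpa [word, Int.fract_eq_self.2 ⟨ht, htt.trans_lt ht'⟩,
        Int.fract_eq_self.2 ⟨ht.trans htt, ht'⟩] using congrFun h ⟨0, Nat.pos_of_ne_zero hn⟩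
    have hshort : t' - t < 1 - logb b 2 := by
      have := abs_sub_lt_of_digit_eq hb1 ht hfirst
      rw [abs_sub_comm, abs_of_nonneg (by linarith)] at this
      linarith [logb_two_lt_half hb]
    obtain ⟨k, hk⟩ := (breakpoint_mem_Ioc_iff ht ht' d i).1 hmem
    exact forall_notMem_of_digit_fract_eq hb1 (by linarith) (by linarith)
      (congrFun h ⟨i, hi⟩) d (Finset.mem_Icc.2 ⟨hd1, hd2⟩) k hk
  · intro h
    funext i
    refine digit_fract_eq_of_forall_notMem hb1 (by linarith) fun d hd k hk => ?_
    rw [Finset.mem_Icc] at hd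
    exact h _ d i hd.1 hd.2 i.2 rfl ((breakpoint_mem_Ioc_iff ht ht' d i).2 ⟨k, hk⟩)

/-- `F` is the set of left endpoints of the maximal intervals of `[0, 1)` on which `W` is
constant, and these intervals carry distinct values of `W`. -/
theorem ncard_image_eq_card_of_eq_iff {β : Type*} (W : ℝ → β) (F : Finset ℝ) {O : Set ℝ}
    (hF : ∀ x ∈ F, x ∈ Ico 0 1) (h0 : 0 ∈ F) (hO : O ⊆ Ico 0 1)
    (hdense : ∀ u v, 0 ≤ u → u < v → v ≤ 1 → ∃ t ∈ O, t ∈ Ioo u v)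
    (hW : ∀ t t', 0 ≤ t → t ≤ t' → t' < 1 → (W t = W t' ↔ ∀ x ∈ F, x ∉ Ioc t t')) :
    (W '' O).ncard = F.card := by
  have himage : W '' O = W '' F := by
    refine subset_antisymm ?_ ?_
    · rintro _ ⟨t, ht, rfl⟩
      have hne : (F.filter (· ≤ t)).Nonempty := ⟨0, Finset.mem_filter.2 ⟨h0, (hO ht).1⟩⟩
      obtain ⟨hξF, hξt⟩ := Finset.mem_filter.1 ((F.filter (· ≤ t)).max'_mem hne)
      refine ⟨_, hξF, (hW _ t (hF _ hξF).1 hξt (hO ht).2).2 fun x hx hxI => ?_⟩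
      have := (F.filter (· ≤ t)).le_max' x (Finset.mem_filter.2 ⟨hx, hxI.2⟩)
      linarith [hxI.1]
    · rintro _ ⟨ξ, hξ, rfl⟩
      set G := insert 1 (F.filter (ξ < ·))
      have hne : G.Nonempty := Finset.insert_nonempty _ _
      have hξη : ξ < G.min' hne := by
        refine (Finset.lt_min'_iff _ _).2 fun y hy => ?_
        rcases Finset.mem_insert.1 hy with rfl | hy
        · exact (hF _ hξ).2
        · exact (Finset.mem_filter.1 hy).2
      obtain ⟨t, ht, htI⟩ := hdense ξ (G.min' hne) (hF _ hξ).1 hξη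
        (G.min'_le 1 (Finset.mem_insert_self _ _))
      refine ⟨t, ht, ((hW ξ t (hF _ hξ).1 htI.1.le (hO ht).2).2 fun x hx hxI => ?_).symm⟩
      have := G.min'_le x (Finset.mem_insert_of_mem (Finset.mem_filter.2 ⟨hx, hxI.1⟩))
      linarith [htI.2, hxI.2]
  have hinj : InjOn W F := by
    intro x hx y hy hxy
    by_contra hne
    rcases lt_or_gt_of_ne hne with hlt | hlt
    · exact (hW x y (hF x hx).1 hlt.le (hF y hy).2).1 hxy y hy ⟨hlt, le_rfl⟩
    · exact (hW y x (hF y hy).1 hlt.le (hF x hx).2).1 hxy.symm x hx ⟨hlt, le_rfl⟩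
  rw [himage, hinj.ncard_image, ncard_coe_finset]

lemma word_fract_nat_mul (hb : 1 < b) (n m : ℕ) :
    word b n (Int.fract (m * logb b 2)) =
      fun i : Fin n => leadingDigit b (2 ^ (m + (i : ℕ))) := by
  funext i
  rw [leadingDigit_eq_digit_fract hb (by positivity), word, logb_pow]
  congr 1
  refine Int.fract_eq_fract.2 ⟨-⌊(m : ℝ) * logb b 2⌋, ?_⟩
  rw [← Int.self_sub_floor]
  push_cast
  ring

lemma blockComplexity_two_eq_card_breakpoints (hb : 4 < b) (hirr : Irrational (logb b 2))
    {n : ℕ} (hn : n ≠ 0) : blockComplexity 2 b n = (breakpoints b n).card := by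
  have hb1 : 1 < b := by omega
  have hblocks : {w : Fin n → ℕ |
      ∃ m : ℕ, 1 ≤ m ∧ ∀ i : Fin n, w i = leadingDigit b ((2 : ℝ) ^ (m + (i : ℕ)))} =
      word b n '' ((fun m : ℕ => Int.fract (m * logb b 2)) '' {m | 1 ≤ m}) := by
    ext w
    constructor
    · rintro ⟨m, hm, hw⟩
      exact ⟨_, ⟨m, hm, rfl⟩, by rw [word_fract_nat_mul hb1]; exact (funext hw).symm⟩
    · rintro ⟨_, ⟨m, hm, rfl⟩, rfl⟩
      exact ⟨m, hm, fun i => by rw [word_fract_nat_mul hb1]⟩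
  rw [blockComplexity, hblocks]
  refine ncard_image_eq_card_of_eq_iff _ _ ?_ ?_ ?_ ?_ ?_
  · intro x hx
    obtain ⟨p, -, rfl⟩ := Finset.mem_image.1 hx
    exact ⟨Int.fract_nonneg _, Int.fract_lt_one _⟩
  · exact Finset.mem_image.2 ⟨(1, 0), mem_digitPairs.2 (by omega), by simp [breakpoint]⟩
  · rintro _ ⟨m, -, rfl⟩
    exact ⟨Int.fract_nonneg _, Int.fract_lt_one _⟩
  · intro u v hu huv hv
    obtain ⟨m, hm⟩ := exists_fract_nat_mul_mem_Ioo hirr hu huv hv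
    refine ⟨_, ⟨m, Nat.one_le_iff_ne_zero.2 ?_, rfl⟩, hm⟩
    rintro rfl
    simp only [CharP.cast_eq_zero, zero_mul, Int.fract_zero] at hm
    exact hu.not_gt hm.1
  · intro t t' ht htt ht'
    exact word_eq_iff hb hn ht htt ht'

lemma fract_logb_eq_fract_logb_iff (hb : 1 < b) {x y : ℝ} (hx : 0 < x) (hy : 0 < y) :
    Int.fract (logb b x) = Int.fract (logb b y) ↔ ∃ k : ℤ, x = y * (b : ℝ) ^ k := by
  have hb' : (1 : ℝ) < b := by exact_mod_cast hb
  rw [Int.fract_eq_fract]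
  refine exists_congr fun k => ?_
  rw [← logb_div hx.ne' hy.ne', logb_eq_iff_rpow_eq (by linarith) hb'.ne' (div_pos hx hy),
    rpow_intCast, eq_div_iff hy.ne', eq_comm, mul_comm]

lemma breakpoint_eq_breakpoint_iff (hb : 1 < b) {d e : ℕ} (hd : d ≠ 0) (he : e ≠ 0) (i j : ℕ) :
    breakpoint b (d, i) = breakpoint b (e, j) ↔
      ∃ k : ℤ, (d : ℝ) * 2 ^ j = e * 2 ^ i * (b : ℝ) ^ k := by
  have hfract : ∀ c k : ℕ, c ≠ 0 → breakpoint b (c, k) = Int.fract (logb b (c / 2 ^ k)) :=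
    fun c k hc => by rw [breakpoint, logb_div (by exact_mod_cast hc) (by positivity), logb_pow]
  rw [hfract d i hd, hfract e j he,
    fract_logb_eq_fract_logb_iff hb (by positivity) (by positivity)]
  refine exists_congr fun k => ?_
  rw [div_eq_iff (by positivity), div_mul_eq_mul_div, mul_right_comm, div_mul_eq_mul_div,
    eq_div_iff (by positivity)]

def oddDigits (b : ℕ) : Finset ℕ :=
  (Finset.Icc 1 (b - 1)).filter fun d => Odd d ∧ (d = 1 → Odd b)

/-- One pair per breakpoint: `(2 * c, i + 1)` gives the same breakpoint as `(c, i)`, and for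
`b = 2 * c` so does `(1, i + 1)`. -/
def canonicalPairs (b n : ℕ) : Finset (ℕ × ℕ) :=
  (digitPairs b n).filter fun p => p.2 ≠ 0 → Odd p.1 ∧ (p.1 = 1 → Odd b)

lemma mem_canonicalPairs {n d i : ℕ} : (d, i) ∈ canonicalPairs b n ↔
    (1 ≤ d ∧ d ≤ b - 1 ∧ i < n) ∧ (i ≠ 0 → Odd d ∧ (d = 1 → Odd b)) := by
  rw [canonicalPairs, Finset.mem_filter, mem_digitPairs]

lemma canonicalPairs_eq_union {n : ℕ} (hn : n ≠ 0) :
    canonicalPairs b n = Finset.Icc 1 (b - 1) ×ˢ {0} ∪ oddDigits b ×ˢ Finset.Ico 1 n := by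
  ext ⟨d, i⟩
  simp only [mem_canonicalPairs, oddDigits, Finset.mem_union, Finset.mem_product,
    Finset.mem_filter, Finset.mem_Icc, Finset.mem_singleton, Finset.mem_Ico, Nat.odd_iff]
  omega

lemma card_oddDigits : (oddDigits b).card = (b - 1) / 2 := by
  have himage : oddDigits b =
      (Finset.range ((b - 1) / 2)).image fun k => 2 * k + 3 - 2 * (b % 2) := by
    ext d
    simp only [oddDigits, Finset.mem_filter, Finset.mem_Icc, Finset.mem_image, Finset.mem_range,
      Nat.odd_iff]
    constructor
    · intro hd
      exact ⟨(d + 2 * (b % 2) - 3) / 2, by omega, by omega⟩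
    · rintro ⟨k, hk, rfl⟩
      omega
  rw [himage, Finset.card_image_of_injective _ fun k l h => by omega,
    Finset.card_range]

lemma card_canonicalPairs {n : ℕ} (hn : n ≠ 0) :
    (canonicalPairs b n).card = (b - 1) + (b - 1) / 2 * (n - 1) := by
  rw [canonicalPairs_eq_union hn, Finset.card_union_of_disjoint, Finset.card_product,
    Finset.card_product, Nat.card_Icc, Finset.card_singleton, card_oddDigits, Nat.card_Ico]
  · omega
  · rw [Finset.disjoint_left]
    rintro ⟨d, i⟩ h1 h2
    simp only [Finset.mem_product, Finset.mem_singleton, Finset.mem_Ico] at h1 h2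
    omega

lemma exists_mem_canonicalPairs_breakpoint_eq (hb : 1 < b) {n d i : ℕ}
    (hp : (d, i) ∈ digitPairs b n) :
    ∃ q ∈ canonicalPairs b n, breakpoint b q = breakpoint b (d, i) := by
  induction i generalizing d with
  | zero => exact ⟨(d, 0), mem_canonicalPairs.2 ⟨mem_digitPairs.1 hp, by simp⟩, rfl⟩
  | succ i ih =>
    rw [mem_digitPairs] at hp
    by_cases heven : Even d
    · obtain ⟨c, rfl⟩ := heven
      obtain ⟨q, hq, hqc⟩ := ih (d := c) (mem_digitPairs.2 (by omega))
      refine ⟨q, hq, hqc.trans ((breakpoint_eq_breakpoint_iff hb (by omega) (by omega) _ _).2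
        ⟨0, ?_⟩)⟩
      push_cast
      rw [zpow_zero]
      ring
    by_cases hone : d = 1 ∧ Even b
    · obtain ⟨rfl, c, hc⟩ := hone
      obtain ⟨q, hq, hqc⟩ := ih (d := c) (mem_digitPairs.2 (by omega))
      refine ⟨q, hq, hqc.trans ((breakpoint_eq_breakpoint_iff hb (by omega) (by omega) _ _).2
        ⟨1, ?_⟩)⟩
      rw [hc]
      push_cast
      rw [zpow_one]
      ring
    · refine ⟨(d, i + 1), mem_canonicalPairs.2 ⟨hp, fun _ => ⟨Nat.not_even_iff_odd.1 heven,
        fun h1 => Nat.not_even_iff_odd.1 fun hb2 => hone ⟨h1, hb2⟩⟩⟩, rfl⟩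

lemma eq_two_mul_and_eq_one_of_pow_dvd (hb : 3 ≤ b) (hsf : Squarefree b) {d j k : ℕ}
    (hk : k ≠ 0) (hd : d ≠ 0) (hdb : d < b) (h : b ^ k ∣ d * 2 ^ j) : b = 2 * d ∧ k = 1 := by
  rcases Nat.even_or_odd b with ⟨c, rfl⟩ | hodd
  · have hc : Odd c := by
      refine Nat.not_even_iff_odd.1 fun ⟨c', hc'⟩ => ?_
      have := hsf 2 ⟨c', by omega⟩
      norm_num at this
    have hcd : c ^ k ∣ d := ((Nat.coprime_two_right.2 hc).pow k j).dvd_of_dvd_mul_right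
      ((pow_dvd_pow_of_dvd (Dvd.intro_left _ rfl) k).trans (by rwa [← two_mul] at h))
    have hk1 : k = 1 := by
      by_contra hk1
      have hc2 : c ^ 2 ≤ d := Nat.le_of_dvd (by omega) ((pow_dvd_pow c (by omega)).trans hcd)
      have : 3 ≤ c := by obtain ⟨c', rfl⟩ := hc; omega
      nlinarith
    subst hk1
    obtain ⟨t, rfl⟩ := pow_one c ▸ hcd
    have ht : t < 2 := Nat.lt_of_mul_lt_mul_left (a := c) (by omega)
    have ht0 : t ≠ 0 := by rintro rfl; simp at hd
    obtain rfl : t = 1 := by omega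
    exact ⟨by ring, rfl⟩
  · have hbd : b ∣ d := (dvd_pow_self b hk).trans
      (((Nat.coprime_two_right.2 hodd).pow k j).dvd_of_dvd_mul_right h)
    exact absurd (Nat.le_of_dvd (by omega) hbd) (by omega)

lemma eq_and_eq_of_mul_two_pow_eq {d e i j : ℕ} (hd : i ≠ 0 → Odd d) (he : j ≠ 0 → Odd e)
    (h : d * 2 ^ j = e * 2 ^ i) : d = e ∧ i = j := by
  wlog hij : i ≤ j generalizing d e i j
  · exact (this he hd h.symm (by omega)).imp Eq.symm Eq.symm
  obtain ⟨l, rfl⟩ := Nat.exists_eq_add_of_le hij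
  have hel : e = d * 2 ^ l :=
    (Nat.eq_of_mul_eq_mul_right (show 0 < 2 ^ i by positivity) (by rw [← h]; ring)).symm
  rcases Nat.eq_zero_or_pos l with rfl | hl
  · simpa using hel.symm
  · exact absurd (he (by omega))
      (Nat.not_odd_iff_even.2 (hel ▸ (Nat.even_pow.2 ⟨even_two, hl.ne'⟩).mul_left d))

lemma eq_of_mul_two_pow_eq_mul_pow (hb : 3 ≤ b) (hsf : Squarefree b) {n d e i j k : ℕ}
    (hp : (d, i) ∈ canonicalPairs b n) (hq : (e, j) ∈ canonicalPairs b n)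
    (h : d * 2 ^ j = e * 2 ^ i * b ^ k) : (d, i) = (e, j) := by
  rw [mem_canonicalPairs] at hp hq
  rcases Nat.eq_zero_or_pos k with rfl | hk
  · rw [pow_zero, mul_one] at h
    obtain ⟨rfl, rfl⟩ := eq_and_eq_of_mul_two_pow_eq (fun hi => (hp.2 hi).1)
      (fun hj => (hq.2 hj).1) h
    rfl
  · have hd0 : d ≠ 0 := by omega
    have hdb : d < b := by omega
    obtain ⟨rfl, rfl⟩ := eq_two_mul_and_eq_one_of_pow_dvd hb hsf hk.ne' hd0 hdb
      (h ▸ dvd_mul_left (b ^ k) (e * 2 ^ i))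
    have h2 : 2 ^ j = e * 2 ^ (i + 1) := by
      apply Nat.eq_of_mul_eq_mul_left (show 0 < d by omega)
      rw [pow_succ]
      linarith
    have hj : j ≠ 0 := by
      rintro rfl
      have : 2 ≤ e * 2 ^ (i + 1) :=
        le_mul_of_one_le_of_le (by omega) (Nat.le_self_pow (by omega) 2)
      omega
    have he1 : e = 1 := ((Nat.coprime_two_right.2 (hq.2 hj).1).pow_right j).eq_one_of_dvd
      (Dvd.intro _ h2.symm)
    exact absurd ((hq.2 hj).2 he1) (Nat.not_odd_iff_even.2 (even_two_mul d))

lemma injOn_breakpoint_canonicalPairs (hb : 3 ≤ b) (hsf : Squarefree b) (n : ℕ) :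
    InjOn (breakpoint b) (canonicalPairs b n) := by
  rintro ⟨d, i⟩ hp ⟨e, j⟩ hq h
  have hne : ∀ {c l : ℕ}, (c, l) ∈ canonicalPairs b n → c ≠ 0 := fun hc => by
    have := (mem_canonicalPairs.1 hc).1
    omega
  have hd := hne hp
  have he := hne hq
  obtain ⟨k, hk⟩ := (breakpoint_eq_breakpoint_iff (by omega) hd he i j).1 h
  obtain ⟨m, rfl | rfl⟩ := Int.eq_nat_or_neg k
  · rw [zpow_natCast] at hk
    exact eq_of_mul_two_pow_eq_mul_pow hb hsf hp hq (by exact_mod_cast hk)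
  · rw [zpow_neg, zpow_natCast, ← div_eq_mul_inv, eq_div_iff (by positivity)] at hk
    exact (eq_of_mul_two_pow_eq_mul_pow hb hsf hq hp (by exact_mod_cast hk.symm)).symm

lemma card_breakpoints (hb : 3 ≤ b) (hsf : Squarefree b) {n : ℕ} (hn : n ≠ 0) :
    (breakpoints b n).card = (b - 1) + (b - 1) / 2 * (n - 1) := by
  have himage : breakpoints b n = (canonicalPairs b n).image (breakpoint b) := by
    refine subset_antisymm (fun x hx => ?_)
      (Finset.image_subset_image (Finset.filter_subset _ _))
    obtain ⟨⟨d, i⟩, hp, rfl⟩ := Finset.mem_image.1 hx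
    obtain ⟨q, hq, hqp⟩ := exists_mem_canonicalPairs_breakpoint_eq (by omega) hp
    exact Finset.mem_image.2 ⟨q, hq, hqp⟩
  rw [himage, Finset.card_image_of_injOn (injOn_breakpoint_canonicalPairs hb hsf n),
    card_canonicalPairs hn]

end LeadingDigits

/-- For squarefree `b ≥ 5`, the block complexity of the leading digit
sequence of `2^n` in base `b` is `p_{2,b}(n) = ⌊(b-1)/2⌋·n + ⌈(b-1)/2⌉`. -/
theorem blockComplexity_two (b : ℕ) (hb : 5 ≤ b) (hsf : Squarefree b) :
    ∀ n : ℕ, 1 ≤ n →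
      blockComplexity (2 : ℝ) b n = (b - 1) / 2 * n + ((b - 1) + 1) / 2 := by
  intro n hn
  rw [LeadingDigits.blockComplexity_two_eq_card_breakpoints hb
      (LeadingDigits.irrational_logb_two (by omega) hsf) (by omega),
    LeadingDigits.card_breakpoints (by omega) hsf (by omega)]
  obtain ⟨n, rfl⟩ := Nat.exists_eq_add_of_le' hn
  rw [Nat.add_sub_cancel, Nat.mul_succ]
  omega
end

section
/- Let b ≥ 5 be squarefree and a a positive rational that is not an integral power of b. Then b/a is also a positive rational that is not an integral power of b, and the leading digit sequences of a^n and (b/a)^n in base b have identical block complexity functions: p_{a,b}(n) = p_{b/a,b}(n) for all n ≥ 1. -/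
/-! With `θ = log_b a`, the leading digit of `a ^ k` is `⌊b ^ fract (k θ)⌋`, read off the orbit of
the rotation by `θ`. This `θ` is irrational: for a prime `r ∣ b` we have `v_r(b) = 1` as `b` is
squarefree, so `a ^ q = b ^ p` gives `p = q v_r(a)` and `a` would be an integral power of `b`.
Since `log_b (b / a) = 1 - θ`, the digits of `(b / a) ^ k` are those of `a ^ (-k)`. The digit is a
right-continuous function of the orbit point and the forward orbit is dense, so every block seen
at some integer time is also seen at a positive time; reversing blocks then matches the two
block sets. -/

open Real Set Filter Topology

def blockAt {α : Type*} (f : ℤ → α) (n : ℕ) (m : ℤ) : Fin n → α := fun i ↦ f (m + i)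

lemma ncard_range_blockAt_comp_neg {α : Type*} (f : ℤ → α) (n : ℕ) :
    (range (blockAt (f ∘ Neg.neg) n)).ncard = (range (blockAt f n)).ncard := by
  have hflip : Function.Involutive (fun m : ℤ ↦ 1 - n - m) := fun m ↦ by ring
  have hrange : range (blockAt (f ∘ Neg.neg) n) =
      (fun w ↦ w ∘ Fin.rev) '' range (blockAt f n) := by
    rw [← range_comp, ← hflip.surjective.range_comp]
    congr 1
    funext m i
    simp only [blockAt, Function.comp_apply, Fin.val_rev]
    congr 1
    push_cast [Nat.cast_sub (Nat.succ_le_of_lt i.isLt)]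
    ring
  have hrev : Function.Involutive (fun w : Fin n → α ↦ w ∘ Fin.rev) :=
    fun w ↦ funext fun i ↦ by simp
  rw [hrange, ncard_image_of_injective _ hrev.injective]

lemma Irrational.exists_fract_succ_mul_mem_Ioo {θ : ℝ} (hθ : Irrational θ) {u v : ℝ}
    (hu : 0 ≤ u) (huv : u < v) (hv : v ≤ 1) : ∃ k : ℕ, Int.fract ((k + 1 : ℕ) * θ) ∈ Ioo u v := by
  have : Fact ((0 : ℝ) < 1) := ⟨one_pos⟩
  have hdense : DenseRange (fun k : ℕ ↦ k • (θ : AddCircle (1 : ℝ))) :=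
    denseRange_zsmul_iff_nsmul.1 (AddCircle.denseRange_zsmul_coe_iff.2 (by simpa using hθ))
  have hopen : IsOpen ((· + (θ : AddCircle (1 : ℝ))) ⁻¹' ((↑) '' Ioo u v)) :=
    (QuotientAddGroup.isOpenMap_coe _ isOpen_Ioo).preimage (continuous_add_const _)
  obtain ⟨k, y, hy, hyk⟩ := hdense.exists_mem_open hopen
    ⟨((u + v) / 2 : ℝ) - θ, (u + v) / 2, ⟨by linarith, by linarith⟩, by simp⟩
  refine ⟨k, ?_⟩
  have hfract : Int.fract ((k + 1 : ℕ) * θ) = y := by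
    refine (AddCircle.coe_eq_coe_iff_of_mem_Ico (a := 0)
      ⟨Int.fract_nonneg _, by simpa using Int.fract_lt_one _⟩
      ⟨hu.trans hy.1.le, by linarith [hy.2]⟩).1 ?_
    rw [AddCircle.coe_fract, ← nsmul_eq_mul, AddCircle.coe_nsmul, succ_nsmul]
    exact hyk.symm
  exact hfract ▸ hy

lemma leadingDigit_rpow {b : ℕ} (hb : 1 < b) (s : ℝ) :
    leadingDigit b ((b : ℝ) ^ s) = ⌊(b : ℝ) ^ Int.fract s⌋.toNat := by
  have hb0 : (0 : ℝ) < b := by positivity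
  rw [leadingDigit, logb_rpow hb0 (by exact_mod_cast hb.ne'), Int.fract,
    rpow_sub hb0, rpow_intCast]

lemma leadingDigit_rpow_add_intCast {b : ℕ} (hb : 1 < b) (s : ℝ) (z : ℤ) :
    leadingDigit b ((b : ℝ) ^ (s + z)) = leadingDigit b ((b : ℝ) ^ s) := by
  rw [leadingDigit_rpow hb, leadingDigit_rpow hb, Int.fract_add_intCast]

lemma leadingDigit_pow {b : ℕ} (hb : 1 < b) {c : ℝ} (hc : 0 < c) (k : ℕ) :
    leadingDigit b (c ^ k) = leadingDigit b ((b : ℝ) ^ (k * logb b c)) := by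
  rw [mul_comm, rpow_mul (by positivity), rpow_logb (by positivity)
    (by exact_mod_cast hb.ne') hc, rpow_natCast]

lemma eventually_leadingDigit_rpow_add_eq {b : ℕ} (hb : 1 < b) (s : ℝ) :
    ∀ᶠ h in 𝓝[≥] (0 : ℝ),
      leadingDigit b ((b : ℝ) ^ (s + h)) = leadingDigit b ((b : ℝ) ^ s) := by
  have hb1 : (1 : ℝ) ≤ b := by exact_mod_cast hb.le
  have hfract : ∀ᶠ h in 𝓝[≥] (0 : ℝ), Int.fract (s + h) = Int.fract s + h := by
    filter_upwards [Ico_mem_nhdsGE (sub_pos.2 (Int.fract_lt_one s))] with h hh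
    rw [Int.fract_eq_iff]
    refine ⟨by linarith [Int.fract_nonneg s, hh.1], by linarith [hh.2], ⌊s⌋, ?_⟩
    rw [Int.fract]; ring
  have hpow : Tendsto (fun h ↦ (b : ℝ) ^ (Int.fract s + h)) (𝓝[≥] 0)
      (𝓝[≥] ((b : ℝ) ^ Int.fract s)) := by
    refine tendsto_nhdsWithin_of_tendsto_nhds_of_eventually_within _ ?_ ?_
    · have : Continuous (fun h : ℝ ↦ (b : ℝ) ^ (Int.fract s + h)) :=
        continuous_const.rpow (continuous_const.add continuous_id) fun _ ↦ Or.inl (by positivity)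
      simpa using this.continuousWithinAt (s := Ici 0) (x := 0) |>.tendsto
    · filter_upwards [self_mem_nhdsWithin] with h hh
      exact rpow_le_rpow_of_exponent_le hb1 (by simpa using hh)
  filter_upwards [hfract, tendsto_pure.1 ((tendsto_floor_right_pure_floor _).comp hpow)]
    with h h1 h2
  rw [leadingDigit_rpow hb, leadingDigit_rpow hb, h1]
  exact congrArg Int.toNat h2

noncomputable def rotationDigit (b : ℕ) (θ : ℝ) (k : ℤ) : ℕ :=
  leadingDigit b ((b : ℝ) ^ (k * θ))

lemma rotationDigit_neg (b : ℕ) (θ : ℝ) :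
    rotationDigit b (-θ) = rotationDigit b θ ∘ Neg.neg := by
  funext k
  simp [rotationDigit]

lemma image_Ici_blockAt_rotationDigit {b : ℕ} (hb : 1 < b) {θ : ℝ} (hθ : Irrational θ)
    (n : ℕ) :
    blockAt (rotationDigit b θ) n '' Ici 1 = range (blockAt (rotationDigit b θ) n) := by
  refine (image_subset_range _ _).antisymm ?_
  rintro _ ⟨m, rfl⟩
  -- leading digits are right-continuous in the exponent, so the block at `m` recurs at any
  -- positive time whose orbit point lies just to the right of that of `m`
  have hconst : ∀ᶠ h in 𝓝[≥] (0 : ℝ), ∀ i : Fin n,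
      leadingDigit b ((b : ℝ) ^ ((m + i : ℤ) * θ + h)) = rotationDigit b θ (m + i) :=
    eventually_all.2 fun i ↦ eventually_leadingDigit_rpow_add_eq hb _
  obtain ⟨δ, hδ, hIco⟩ := mem_nhdsGE_iff_exists_Ico_subset.1 hconst
  obtain ⟨k, hk⟩ := hθ.exists_fract_succ_mul_mem_Ioo (Int.fract_nonneg ((m : ℝ) * θ))
    (lt_min (lt_add_of_pos_right _ hδ) (Int.fract_lt_one _)) (min_le_right _ _)
  refine ⟨(k + 1 : ℕ), by simp, funext fun i ↦ ?_⟩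
  set h := Int.fract ((k + 1 : ℕ) * θ) - Int.fract ((m : ℝ) * θ)
  have hshift : ((k + 1 : ℕ) + i : ℤ) * θ =
      (m + i : ℤ) * θ + h + (⌊((k + 1 : ℕ) : ℝ) * θ⌋ - ⌊(m : ℝ) * θ⌋ : ℤ) := by
    simp only [h, Int.fract]; push_cast; ring
  have hh : h ∈ Ico 0 δ :=
    ⟨by linarith [hk.1], by linarith [hk.2.trans_le (min_le_left _ _)]⟩
  simp only [blockAt, rotationDigit]
  rw [hshift, leadingDigit_rpow_add_intCast hb]
  exact hIco hh i

lemma blockComplexity_eq_ncard_image {b : ℕ} {c : ℝ} {f : ℤ → ℕ}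
    (hf : ∀ k : ℕ, leadingDigit b (c ^ k) = f k) (n : ℕ) :
    blockComplexity c b n = (blockAt f n '' Ici 1).ncard := by
  rw [blockComplexity]
  congr 1
  ext w
  constructor
  · rintro ⟨m, hm, hw⟩
    exact ⟨m, by simpa using hm, funext fun i ↦ by rw [hw, blockAt, ← Nat.cast_add, hf]⟩
  · rintro ⟨m, hm, rfl⟩
    lift m to ℕ using (zero_le_one.trans hm)
    exact ⟨m, by simpa using hm, fun i ↦ by rw [blockAt, ← Nat.cast_add, hf]⟩

lemma irrational_logb_of_squarefree {b : ℕ} (hb : 1 < b) (hsf : Squarefree b) {a : ℚ}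
    (ha : 0 < a) (hnp : ∀ j : ℤ, (a : ℝ) ≠ (b : ℝ) ^ j) : Irrational (logb b a) := by
  rintro ⟨x, hx⟩
  have hb0 : (0 : ℝ) < b := by positivity
  have hb1 : (b : ℝ) ≠ 1 := by exact_mod_cast hb.ne'
  have hbx : (b : ℝ) ^ (x : ℝ) = a := by rw [hx, rpow_logb hb0 hb1 (by exact_mod_cast ha)]
  have hpow : a ^ x.den = (b : ℚ) ^ x.num := by
    refine Rat.cast_injective (α := ℝ) ?_
    push_cast
    rw [← hbx, ← rpow_natCast, ← rpow_mul hb0.le, ← rpow_intCast]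
    exact congrArg _ (by exact_mod_cast Rat.mul_den_eq_num x)
  obtain ⟨r, hr, hrb⟩ := Nat.exists_prime_and_dvd hb.ne'
  have : Fact r.Prime := ⟨hr⟩
  have hvb : padicValRat r b = 1 := by
    rw [padicValRat.of_nat, ← Nat.factorization_def _ hr,
      Nat.factorization_eq_one_of_squarefree hsf hr hrb, Nat.cast_one]
  have hnum : x.num = x.den * padicValRat r a := by
    simpa [hvb] using (congrArg (padicValRat r) hpow).symm
  have hxv : (x : ℝ) = padicValRat r a := by
    rw [← Rat.num_div_den x, hnum]
    push_cast
    field_simp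
  exact hnp (padicValRat r a) (by rw [← hbx, hxv, rpow_intCast])

/-- Symmetry: For squarefree `b ≥ 5` and positive rational `a` not an
integral power of `b`, `b/a` is also a positive rational not an integral power of `b`,
and `p_{a,b}(n) = p_{b/a,b}(n)` for all `n ≥ 1`. -/
theorem blockComplexity_symmetry (b : ℕ) (hb : 5 ≤ b) (hsf : Squarefree b)
    (a : ℚ) (ha : 0 < a) (hnp : ∀ j : ℤ, (a : ℝ) ≠ (b : ℝ) ^ j) :
    0 < (b : ℚ) / a ∧ (∀ j : ℤ, (((b : ℚ) / a : ℚ) : ℝ) ≠ (b : ℝ) ^ j) ∧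
      ∀ n : ℕ, 1 ≤ n →
        blockComplexity (a : ℝ) b n = blockComplexity ((((b : ℚ) / a : ℚ)) : ℝ) b n := by
  have hb1 : 1 < b := by omega
  have hb0 : (b : ℝ) ≠ 0 := by positivity
  have haR : (0 : ℝ) < a := by exact_mod_cast ha
  have hcast : (((b : ℚ) / a : ℚ) : ℝ) = b / a := by push_cast; rfl
  refine ⟨by positivity, fun j hj ↦ hnp (1 - j) ?_, fun n _ ↦ ?_⟩
  · rw [zpow_sub₀ hb0, zpow_one, ← hj, hcast, div_div_cancel₀ hb0]
  set θ := logb b (a : ℝ)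
  have hθ : Irrational θ := irrational_logb_of_squarefree hb1 hsf ha hnp
  have hA : blockComplexity a b n = (blockAt (rotationDigit b θ) n '' Ici 1).ncard :=
    blockComplexity_eq_ncard_image (fun k ↦ leadingDigit_pow hb1 haR k) n
  have hB : blockComplexity (((b : ℚ) / a : ℚ) : ℝ) b n =
      (blockAt (rotationDigit b (-θ)) n '' Ici 1).ncard := by
    refine blockComplexity_eq_ncard_image (fun k ↦ ?_) n
    have hlog : logb b (((b : ℚ) / a : ℚ) : ℝ) = -θ + 1 := by
      rw [hcast, logb_div hb0 haR.ne', logb_self_eq_one (by exact_mod_cast hb1)]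
      ring
    rw [leadingDigit_pow hb1 (by positivity), hlog, mul_add, mul_one,
      ← Int.cast_natCast k, leadingDigit_rpow_add_intCast hb1]
    rfl
  rw [hA, hB, image_Ici_blockAt_rotationDigit hb1 hθ,
    image_Ici_blockAt_rotationDigit hb1 hθ.neg, rotationDigit_neg, ncard_range_blockAt_comp_neg]
end

section
/- For every ε > 0 there is a constant C such that for all integers b ≥ 3, the sum over a = 2 to b−1 of (b − ⌊(b−1)/a⌋ − gcd(a,b)) equals b(b−2) + E with |E| ≤ C·b^{1+ε}. Equivalently, the average slope (1/(b−2))·Σ_{a=2}^{b−1} c_{a,b} equals b + O_ε(b^ε). -/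
/-!
The error term is `-(∑ ⌊(b-1)/a⌋ + ∑ gcd(a, b))`. The floor sum is at most `b · H_b ≤ b (1 + log b)`.
Grouping the gcd sum by the value `d = gcd(a, b)`, each divisor `d` of `b` contributes at most
`d · (b / d) ≤ b`, so that sum is at most `b · τ(b)`. Finally `τ(n) = ∏ (k_p + 1) = O_ε(n^ε)`:
the factor `k + 1` is at most `p^{kε}` once `p ≥ 2^{1/ε}`, and at most a constant depending only on
`ε` times `p^{kε}` for each of the finitely many smaller primes.
-/

open Finset Real

lemma natCast_add_one_le_rpow_mul {x ε : ℝ} (hε : 0 < ε) (hx : 2 ^ ε⁻¹ ≤ x) (k : ℕ) :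
    (k + 1 : ℝ) ≤ x ^ (k * ε) := by
  have hx0 : 0 ≤ x := le_trans (by positivity) hx
  have two_le : (2 : ℝ) ≤ x ^ ε := by
    simpa [← rpow_mul, inv_mul_cancel₀ hε.ne'] using rpow_le_rpow (by positivity) hx hε.le
  calc (k + 1 : ℝ) ≤ 2 ^ k := by exact_mod_cast Nat.lt_two_pow_self
    _ ≤ (x ^ ε) ^ k := pow_le_pow_left₀ zero_le_two two_le k
    _ = x ^ (k * ε) := by rw [mul_comm, rpow_mul hx0, rpow_natCast]

lemma natCast_add_one_le_mul_rpow_mul {x ε : ℝ} (hε : 0 < ε) (hx : 2 ≤ x) (k : ℕ) :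
    (k + 1 : ℝ) ≤ (1 + (ε * log 2)⁻¹) * x ^ (k * ε) := by
  set c := ε * log 2
  have hc : 0 < c := mul_pos hε (log_pos one_lt_two)
  have exp_bound : 1 + k * c ≤ x ^ (k * ε) :=
    calc 1 + k * c ≤ exp (k * c) := by linarith [add_one_le_exp (k * c)]
      _ = 2 ^ (k * ε) := by rw [rpow_def_of_pos two_pos]; congr 1; simp only [c]; ring
      _ ≤ x ^ (k * ε) := rpow_le_rpow zero_le_two hx (by positivity)
  calc (k + 1 : ℝ) ≤ 1 + k * c + c⁻¹ + k := by
        have : 0 ≤ (k : ℝ) * c := by positivity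
        linarith [inv_pos.2 hc]
    _ = (1 + c⁻¹) * (1 + k * c) := by field_simp; ring
    _ ≤ (1 + c⁻¹) * x ^ (k * ε) := by gcongr

theorem card_divisors_le_mul_rpow {ε : ℝ} (hε : 0 < ε) :
    ∃ C : ℝ, ∀ n : ℕ, n ≠ 0 → (#n.divisors : ℝ) ≤ C * n ^ ε := by
  set M := 1 + (ε * log 2)⁻¹
  have hM : 1 ≤ M := le_add_of_nonneg_right (by positivity [log_pos one_lt_two])
  set B := ⌈(2 : ℝ) ^ ε⁻¹⌉₊
  refine ⟨M ^ B, fun n hn => ?_⟩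
  have local_bound : ∀ p ∈ n.primeFactors, ((n.factorization p + 1 : ℕ) : ℝ) ≤
      (if p < B then M else 1) * (p : ℝ) ^ ((n.factorization p : ℝ) * ε) := by
    intro p hp
    have hp2 : (2 : ℝ) ≤ p := by exact_mod_cast (Nat.prime_of_mem_primeFactors hp).two_le
    push_cast
    split_ifs with hpB
    · exact natCast_add_one_le_mul_rpow_mul hε hp2 _
    · rw [one_mul]
      exact natCast_add_one_le_rpow_mul hε (Nat.ceil_le.mp (not_lt.mp hpB)) _
  have small_primes : ∏ p ∈ n.primeFactors, (if p < B then M else 1) ≤ M ^ B := by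
    rw [prod_ite, prod_const, prod_const, one_pow, mul_one]
    refine pow_le_pow_right₀ hM ((card_le_card fun p hp => ?_).trans_eq (card_range B))
    exact mem_range.2 (mem_filter.1 hp).2
  have prod_rpow : ∏ p ∈ n.primeFactors, (p : ℝ) ^ ((n.factorization p : ℝ) * ε) = n ^ ε := by
    conv_rhs => rw [Nat.prod_primeFactors_pow_factorization hn]
    push_cast
    rw [← finsetProd_rpow _ _ fun p _ => by positivity]
    refine prod_congr rfl fun p _ => ?_
    rw [rpow_mul (by positivity), rpow_natCast]
  calc (#n.divisors : ℝ) = ∏ p ∈ n.primeFactors, ((n.factorization p + 1 : ℕ) : ℝ) := by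
        rw [Nat.card_divisors hn]; push_cast; rfl
    _ ≤ ∏ p ∈ n.primeFactors,
          (if p < B then M else 1) * (p : ℝ) ^ ((n.factorization p : ℝ) * ε) :=
        prod_le_prod (fun _ _ => by positivity) local_bound
    _ ≤ M ^ B * n ^ ε := by
        rw [prod_mul_distrib, prod_rpow]
        exact mul_le_mul_of_nonneg_right small_primes (by positivity)

theorem sum_Icc_gcd_le (n : ℕ) : ∑ a ∈ Icc 1 n, a.gcd n ≤ #n.divisors * n := by
  rcases n.eq_zero_or_pos with rfl | hn
  · simp
  have gcd_mem : ∀ a ∈ Icc 1 n, a.gcd n ∈ n.divisors :=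
    fun a _ => Nat.mem_divisors.2 ⟨Nat.gcd_dvd_right a n, hn.ne'⟩
  rw [← sum_fiberwise_of_maps_to gcd_mem, ← smul_eq_mul, ← sum_const]
  refine sum_le_sum fun d _ => ?_
  have fiber_sub : {a ∈ Icc 1 n | a.gcd n = d} ⊆ {a ∈ Ioc 0 n | d ∣ a} := fun a ha => by
    obtain ⟨ha, rfl⟩ := mem_filter.1 ha
    exact mem_filter.2 ⟨by simp at ha ⊢; omega, Nat.gcd_dvd_left a n⟩
  calc ∑ a ∈ Icc 1 n with a.gcd n = d, a.gcd n = #{a ∈ Icc 1 n | a.gcd n = d} * d := by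
        rw [sum_congr rfl fun a ha => (mem_filter.1 ha).2, sum_const, smul_eq_mul]
    _ ≤ n / d * d := by
        rw [← Nat.Ioc_filter_dvd_card_eq_div]; gcongr
    _ ≤ n := Nat.div_mul_le_self n d

theorem sum_Icc_div_le (m n : ℕ) :
    ∑ a ∈ Icc 1 n, ((m / a : ℕ) : ℝ) ≤ m * (1 + log n) :=
  calc ∑ a ∈ Icc 1 n, ((m / a : ℕ) : ℝ) ≤ ∑ a ∈ Icc 1 n, (m : ℝ) * (a : ℝ)⁻¹ :=
        sum_le_sum fun a _ => by rw [← div_eq_mul_inv]; exact Nat.cast_div_le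
    _ = m * harmonic n := by rw [← mul_sum, harmonic_eq_sum_Icc]; push_cast; rfl
    _ ≤ m * (1 + log n) := by gcongr; exact harmonic_le_one_add_log n

lemma mul_one_add_log_le_rpow {x ε : ℝ} (hx : 1 ≤ x) (hε : 0 < ε) :
    x * (1 + log x) ≤ (1 + ε⁻¹) * x ^ (1 + ε) := by
  have hx0 : 0 < x := one_pos.trans_le hx
  have hxε : 1 ≤ x ^ ε := one_le_rpow hx hε.le
  rw [rpow_add hx0, rpow_one]
  have := log_le_rpow_div hx0.le hε
  rw [div_eq_mul_inv] at this
  nlinarith [mul_le_mul_of_nonneg_left this hx0.le, inv_pos.2 hε]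

/-- For every `ε > 0` there is a constant `C` such that for all `b ≥ 3`,
`∑_{a=2}^{b-1} (b - ⌊(b-1)/a⌋ - gcd(a,b)) = b(b-2) + E` with `|E| ≤ C·b^{1+ε}`;
i.e. the average slope is `b + O_ε(b^ε)`. -/
theorem average_slope (ε : ℝ) (hε : 0 < ε) :
    ∃ C : ℝ, ∀ b : ℕ, 3 ≤ b →
      |(∑ a ∈ Finset.Ico 2 b,
          ((b : ℝ) - (((b - 1) / a : ℕ) : ℝ) - (Nat.gcd a b : ℝ))) -
        (b : ℝ) * ((b : ℝ) - 2)| ≤ C * (b : ℝ) ^ ((1 : ℝ) + ε) := by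
  obtain ⟨C, hC⟩ := card_divisors_le_mul_rpow hε
  refine ⟨1 + ε⁻¹ + C, fun b hb => ?_⟩
  have hb1 : (1 : ℝ) ≤ b := by exact_mod_cast (by omega : 1 ≤ b)
  have sub_Icc : Ico 2 b ⊆ Icc 1 b := fun a ha => by simp at ha ⊢; omega
  set S₁ := ∑ a ∈ Ico 2 b, (((b - 1) / a : ℕ) : ℝ)
  set S₂ := ∑ a ∈ Ico 2 b, (a.gcd b : ℝ)
  have hsum : ∑ a ∈ Ico 2 b, ((b : ℝ) - (((b - 1) / a : ℕ) : ℝ) - (a.gcd b : ℝ)) =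
      b * (b - 2) - S₁ - S₂ := by
    rw [sum_sub_distrib, sum_sub_distrib, sum_const, Nat.card_Ico, nsmul_eq_mul,
      Nat.cast_sub (by omega)]
    push_cast; ring
  have hS₁ : S₁ ≤ (1 + ε⁻¹) * b ^ (1 + ε) :=
    calc S₁ ≤ ∑ a ∈ Icc 1 b, (((b - 1) / a : ℕ) : ℝ) :=
          sum_le_sum_of_subset_of_nonneg sub_Icc fun _ _ _ => by positivity
      _ ≤ b * (1 + log b) := by
          refine (sum_Icc_div_le _ _).trans ?_
          gcongr
          exact_mod_cast b.sub_le 1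
      _ ≤ (1 + ε⁻¹) * b ^ (1 + ε) := mul_one_add_log_le_rpow hb1 hε
  have hS₂ : S₂ ≤ C * b ^ (1 + ε) :=
    calc S₂ ≤ ((∑ a ∈ Icc 1 b, a.gcd b : ℕ) : ℝ) := by
          push_cast; exact sum_le_sum_of_subset_of_nonneg sub_Icc fun _ _ _ => by positivity
      _ ≤ (#b.divisors : ℝ) * b := by exact_mod_cast sum_Icc_gcd_le b
      _ ≤ C * b ^ ε * b := by gcongr; exact hC b (by omega)
      _ = C * b ^ (1 + ε) := by rw [rpow_add (by positivity), rpow_one]; ring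
  have hS₁₂ : 0 ≤ S₁ + S₂ := add_nonneg (sum_nonneg fun _ _ => by positivity)
    (sum_nonneg fun _ _ => by positivity)
  rw [hsum, abs_le]
  constructor <;> linarith
end
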